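/- arXiv:2104.07912 — 5 statements merged into one kernel-verified Lean document; each statement's English description precedes it below -/
import Mathlib

section
/- Let p, q ≥ 3 be odd integers. The number of pairs (J_1, J_2) ∈ A_{p,i_1} × A_{q,i_2} (with A_{p,i} = {(j_1,…,j_p) ∈ {±1,…,±b_n}^p : Σ (-1)^k j_k = 2i-1-n}) such that every element of the combined multiset S_{J_1} ∪ S_{J_2} has multiplicity exactly 2 and S_{J_1} ∩ S_{J_2} ≠ ∅, with 2i_1 - n - 1 ≠ 0 and 2i_2 - n - 1 ≠ 0 and i_1 ≠ i_2, is at most C · b_n^{(p+q-4)/2} for a constant C depending only on p and q. -/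
/-!
Since every value occurs exactly twice, the coordinates of `(J₁, J₂)` are paired by a
fixed-point-free involution `σ` of `Fin p ⊕ Fin q`, and `(J₁, J₂)` is determined by `σ` and one
value per pair, i.e. by `(p + q) / 2` integers in `[-bn, bn]`. These satisfy two linear equations
whose coefficient rows both sum to `-1`, because `p` and `q` are odd. Proportional rows would
therefore be equal and force `i₁ = i₂`; so some `2 × 2` minor is nonzero, and by Cramer's rule the
values on the two corresponding pairs are determined by the remaining `(p + q - 4) / 2` values.
-/

open Finset Function

namespace CrossMatched

lemma sum_neg_one_pow_succ_of_odd {m : ℕ} (hm : Odd m) :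
    ∑ k : Fin m, (-1 : ℤ) ^ ((k : ℕ) + 1) = -1 := by
  rw [Fin.sum_univ_eq_sum_range (fun k => (-1 : ℤ) ^ (k + 1)) m]
  simp only [pow_succ, ← sum_mul, neg_one_geom_sum, Nat.not_even_iff_odd.mpr hm, if_false]
  norm_num

section Transversal

variable {ι : Type*} [Fintype ι] [LinearOrder ι] {σ : ι → ι}

lemma sum_eq_sum_filter_lt_apply_add {M : Type*} [AddCommMonoid M] (hσ : Involutive σ)
    (hfix : ∀ t, σ t ≠ t) (g : ι → M) :
    ∑ t, g t = ∑ t with t < σ t, (g t + g (σ t)) := by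
  rw [sum_add_distrib, ← sum_filter_add_sum_filter_not univ (fun t => t < σ t)]
  congr 1
  refine sum_nbij' σ σ ?_ ?_ (fun t _ => hσ t) (fun t _ => hσ t) (fun t _ => by rw [hσ t]) <;>
    intro t ht <;> simp only [mem_filter, mem_univ, true_and, hσ t] at ht ⊢
  · exact lt_of_le_of_ne (not_lt.mp ht) (hfix t)
  · exact ht.le.not_gt

lemma sum_mul_eq_sum_filter_lt_add_mul {R : Type*} [CommSemiring R] (hσ : Involutive σ)
    (hfix : ∀ t, σ t ≠ t) (γ : ι → R) {V : ι → R} (hV : ∀ t, V (σ t) = V t) :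
    ∑ t, γ t * V t = ∑ t with t < σ t, (γ t + γ (σ t)) * V t := by
  rw [sum_eq_sum_filter_lt_apply_add hσ hfix]
  exact sum_congr rfl fun t _ => by rw [hV, add_mul]

lemma mem_filter_lt_or_apply_mem (hσ : Involutive σ) (hfix : ∀ t, σ t ≠ t) (t : ι) :
    t ∈ ({s | s < σ s} : Finset ι) ∨ σ t ∈ ({s | s < σ s} : Finset ι) := by
  simpa [hσ t, or_comm] using (hfix t).lt_or_gt

lemma two_mul_card_filter_lt (hσ : Involutive σ) (hfix : ∀ t, σ t ≠ t) :
    2 * #{t | t < σ t} = Fintype.card ι := by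
  have h := sum_eq_sum_filter_lt_apply_add hσ hfix fun _ => (1 : ℕ)
  simp only [sum_const, smul_eq_mul, mul_one, card_univ] at h
  omega

end Transversal

section Minors

variable {R ι : Type*} [CommRing R] [IsDomain R] {X : Finset ι} {a b : ι → R}

lemma exists_minor_ne_zero {w : ι → R} {c₁ c₂ : R} (hab : ∑ t ∈ X, a t = ∑ t ∈ X, b t)
    (ha : ∑ t ∈ X, a t ≠ 0) (h₁ : ∑ t ∈ X, a t * w t = c₁) (h₂ : ∑ t ∈ X, b t * w t = c₂)
    (hc : c₁ ≠ c₂) : ∃ e₁ ∈ X, ∃ e₂ ∈ X, a e₁ * b e₂ ≠ a e₂ * b e₁ := by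
  by_contra! hminor
  obtain ⟨r, hr, har⟩ := exists_ne_zero_of_sum_ne_zero ha
  have hbr : b r = a r := by
    refine mul_left_cancel₀ ha ?_
    calc (∑ t ∈ X, a t) * b r = ∑ t ∈ X, a r * b t := by
          rw [sum_mul]; exact sum_congr rfl fun t ht => hminor t ht r hr
      _ = (∑ t ∈ X, a t) * a r := by rw [← mul_sum, ← hab, mul_comm]
  refine hc (mul_right_cancel₀ har ?_)
  calc c₁ * a r = ∑ t ∈ X, a r * b t * w t := by
        rw [← h₁, sum_mul]
        exact sum_congr rfl fun t ht => by
          linear_combination w t * hminor t ht r hr - a t * w t * hbr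
    _ = c₂ * a r := by rw [← h₂, sum_mul]; exact sum_congr rfl fun t _ => by ring

lemma eq_zero_of_minor_ne_zero {e₁ e₂ : ι} (he₁ : e₁ ∈ X) (he₂ : e₂ ∈ X)
    (hdet : a e₁ * b e₂ ≠ a e₂ * b e₁) {d : ι → R} (ha : ∑ t ∈ X, a t * d t = 0)
    (hb : ∑ t ∈ X, b t * d t = 0) (hoff : ∀ t ∈ X, t ≠ e₁ → t ≠ e₂ → d t = 0) :
    ∀ t ∈ X, d t = 0 := by
  have hne : e₁ ≠ e₂ := by rintro rfl; exact hdet rfl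
  have hpair (c : ι → R) : ∑ t ∈ X, c t * d t = c e₁ * d e₁ + c e₂ * d e₂ :=
    sum_eq_add_of_mem e₁ e₂ he₁ he₂ hne fun t ht h => by rw [hoff t ht h.1 h.2, mul_zero]
  rw [hpair] at ha hb
  have hdet' : a e₁ * b e₂ - a e₂ * b e₁ ≠ 0 := sub_ne_zero.mpr hdet
  intro t ht
  by_cases h₁ : t = e₁
  · subst h₁
    refine (mul_eq_zero.mp ?_).resolve_left hdet'
    linear_combination b e₂ * ha - a e₂ * hb
  by_cases h₂ : t = e₂
  · subst h₂
    refine (mul_eq_zero.mp ?_).resolve_left hdet'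
    linear_combination a e₁ * hb - b e₁ * ha
  exact hoff t ht h₁ h₂

end Minors

lemma exists_involutive_pairing {ι α : Type*} [Fintype ι] [DecidableEq ι] [DecidableEq α]
    {V : ι → α} (hV : ∀ t, #{u | V u = V t} = 2) :
    ∃ σ : ι → ι, Involutive σ ∧ (∀ t, σ t ≠ t) ∧ ∀ t, V (σ t) = V t := by
  have hone (t : ι) : ∃ u, ({u | V u = V t} : Finset ι).erase t = {u} :=
    card_eq_one.mp (by rw [card_erase_of_mem (by simp), hV])
  choose σ hσ using hone
  have hmem (t : ι) : σ t ≠ t ∧ V (σ t) = V t := by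
    have h := mem_singleton_self (σ t)
    rw [← hσ t] at h
    simpa using h
  refine ⟨σ, fun t => ?_, fun t => (hmem t).1, fun t => (hmem t).2⟩
  have ht : t ∈ ({u | V u = V (σ t)} : Finset ι).erase (σ t) := by
    simpa [(hmem t).2] using (hmem t).1.symm
  rw [hσ] at ht
  exact (mem_singleton.mp ht).symm

lemma card_piFinset_Icc {ι : Type*} [DecidableEq ι] (D : Finset ι) (b : ℕ) :
    #(Fintype.piFinset fun _ : D => Icc (-(b : ℤ)) b) = (2 * b + 1) ^ #D := by
  rw [Fintype.card_piFinset, prod_const, Int.card_Icc, card_univ, Fintype.card_coe]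
  congr 1
  omega

section Counting

variable {ι : Type*} [Fintype ι] [DecidableEq ι]

noncomputable def symmetricSolutions (σ : ι → ι) (α β : ι → ℤ) (c₁ c₂ : ℤ) (b : ℕ) :
    Finset (ι → ℤ) :=
  {V ∈ Fintype.piFinset fun _ => Icc (-(b : ℤ)) b |
    (∀ t, V (σ t) = V t) ∧ ∑ t, α t * V t = c₁ ∧ ∑ t, β t * V t = c₂}

noncomputable def pairedSolutions (α β : ι → ℤ) (c₁ c₂ : ℤ) (b : ℕ) : Finset (ι → ℤ) :=
  {V ∈ Fintype.piFinset fun _ => Icc (-(b : ℤ)) b |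
    (∀ t, #{u | V u = V t} = 2) ∧ ∑ t, α t * V t = c₁ ∧ ∑ t, β t * V t = c₂}

variable {α β : ι → ℤ} {c₁ c₂ : ℤ}

theorem card_symmetricSolutions_le {σ : ι → ι} (hσ : Involutive σ) (hfix : ∀ t, σ t ≠ t)
    (hαβ : ∑ t, α t = ∑ t, β t) (hα : ∑ t, α t ≠ 0) (hc : c₁ ≠ c₂) (b : ℕ) :
    #(symmetricSolutions σ α β c₁ c₂ b) ≤ (2 * b + 1) ^ ((Fintype.card ι - 4) / 2) := by
  set S := symmetricSolutions σ α β c₁ c₂ b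
  rcases S.eq_empty_or_nonempty with hS | ⟨V₀, hV₀⟩
  · simp [hS]
  -- any linear order serves to pick the representative `t < σ t` of each pair `{t, σ t}`
  let : LinearOrder ι := LinearOrder.lift' _ (Fintype.equivFin ι).injective
  set X : Finset ι := {t | t < σ t}
  have hfold := sum_mul_eq_sum_filter_lt_add_mul (R := ℤ) hσ hfix
  have hfold₁ := sum_eq_sum_filter_lt_apply_add (M := ℤ) hσ hfix
  simp only [S, symmetricSolutions, mem_filter] at hV₀
  obtain ⟨e₁, he₁, e₂, he₂, hdet⟩ := exists_minor_ne_zero (X := X) (w := V₀)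
    (a := fun t => α t + α (σ t)) (b := fun t => β t + β (σ t))
    (by rwa [← hfold₁, ← hfold₁]) (by rwa [← hfold₁])
    (by rw [← hfold _ hV₀.2.1, hV₀.2.2.1]) (by rw [← hfold _ hV₀.2.1, hV₀.2.2.2]) hc
  have he : e₁ ≠ e₂ := by rintro rfl; exact hdet rfl
  set D := (X.erase e₁).erase e₂
  have hD : #D = (Fintype.card ι - 4) / 2 := by
    have hX : 2 * #X = Fintype.card ι := two_mul_card_filter_lt hσ hfix
    rw [card_erase_of_mem (mem_erase.mpr ⟨he.symm, he₂⟩), card_erase_of_mem he₁]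
    omega
  rw [← hD, ← card_piFinset_Icc]
  refine card_le_card_of_injOn D.restrict (fun V hV => ?_) fun V hV V' hV' hVV' => ?_
  · simp only [S, symmetricSolutions, mem_coe, mem_filter, Fintype.mem_piFinset] at hV ⊢
    exact fun t => hV.1 t
  · simp only [S, symmetricSolutions, mem_coe, mem_filter] at hV hV'
    have hX := eq_zero_of_minor_ne_zero he₁ he₂ hdet (d := V - V')
      (by simp only [Pi.sub_apply, mul_sub, sum_sub_distrib]
          rw [← hfold _ hV.2.1, ← hfold _ hV'.2.1, hV.2.2.1, hV'.2.2.1, sub_self])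
      (by simp only [Pi.sub_apply, mul_sub, sum_sub_distrib]
          rw [← hfold _ hV.2.1, ← hfold _ hV'.2.1, hV.2.2.2, hV'.2.2.2, sub_self])
      fun t ht h₁ h₂ => sub_eq_zero.mpr (congrFun hVV' ⟨t, by simp [D, ht, h₁, h₂]⟩)
    funext t
    rcases mem_filter_lt_or_apply_mem hσ hfix t with ht | ht
    · exact sub_eq_zero.mp (hX t ht)
    · rw [← hV.2.1, ← hV'.2.1]; exact sub_eq_zero.mp (hX _ ht)

theorem card_pairedSolutions_le (hαβ : ∑ t, α t = ∑ t, β t) (hα : ∑ t, α t ≠ 0)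
    (hc : c₁ ≠ c₂) (b : ℕ) :
    #(pairedSolutions α β c₁ c₂ b) ≤
      Fintype.card (ι → ι) * (2 * b + 1) ^ ((Fintype.card ι - 4) / 2) := by
  classical
  calc _ ≤ #(({σ : ι → ι | Involutive σ ∧ ∀ t, σ t ≠ t} : Finset _).biUnion fun σ =>
        symmetricSolutions σ α β c₁ c₂ b) := by
        refine card_le_card fun V hV => ?_
        simp only [pairedSolutions, mem_filter] at hV
        obtain ⟨σ, hσ, hfix, hVσ⟩ := exists_involutive_pairing hV.2.1
        simp only [mem_biUnion, symmetricSolutions, mem_filter, mem_univ, true_and]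
        exact ⟨σ, ⟨hσ, hfix⟩, hV.1, hVσ, hV.2.2⟩
    _ ≤ #({σ : ι → ι | Involutive σ ∧ ∀ t, σ t ≠ t} : Finset _) *
          (2 * b + 1) ^ ((Fintype.card ι - 4) / 2) :=
        card_biUnion_le_card_mul _ _ _ fun σ hσ =>
          card_symmetricSolutions_le (mem_filter.mp hσ).2.1 (mem_filter.mp hσ).2.2 hαβ hα hc b
    _ ≤ _ := Nat.mul_le_mul_right _ (card_le_univ _)

end Counting

lemma card_filter_sum_elim_eq_two {κ μ γ : Type*} [Fintype κ] [Fintype μ] [DecidableEq γ]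
    {A : κ → γ} {B : μ → γ}
    (h : ∀ v, #{k | A k = v} + #{l | B l = v} = 0 ∨ #{k | A k = v} + #{l | B l = v} = 2)
    (t : κ ⊕ μ) : #{u | Sum.elim A B u = Sum.elim A B t} = 2 := by
  have hsplit (v : γ) : #{u | Sum.elim A B u = v} = #{k | A k = v} + #{l | B l = v} := by
    simp only [card_filter, Fintype.sum_sum_type, Sum.elim_inl, Sum.elim_inr]
    rfl
  have ht : 0 < #{u | Sum.elim A B u = Sum.elim A B t} := card_pos.mpr ⟨t, by simp⟩
  rw [hsplit] at ht ⊢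
  exact (h _).resolve_left ht.ne'

lemma sum_elim_mem_pairedSolutions {κ μ : Type*} [Fintype κ] [Fintype μ] [DecidableEq κ]
    [DecidableEq μ] {A a : κ → ℤ} {B a' : μ → ℤ} {c₁ c₂ : ℤ} {b : ℕ}
    (hA : ∀ k, |A k| ≤ b) (hB : ∀ l, |B l| ≤ b)
    (hsA : ∑ k, a k * A k = c₁) (hsB : ∑ l, a' l * B l = c₂)
    (hmult : ∀ v, #{k | A k = v} + #{l | B l = v} = 0 ∨ #{k | A k = v} + #{l | B l = v} = 2) :
    Sum.elim A B ∈ pairedSolutions (Sum.elim a 0) (Sum.elim 0 a') c₁ c₂ b := by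
  simp only [pairedSolutions, mem_filter, Fintype.mem_piFinset, mem_Icc]
  refine ⟨?_, card_filter_sum_elim_eq_two hmult, ?_, ?_⟩
  · rintro (k | l)
    exacts [abs_le.mp (hA k), abs_le.mp (hB l)]
  · simpa [Fintype.sum_sum_type] using hsA
  · simpa [Fintype.sum_sum_type] using hsB

end CrossMatched

open CrossMatched in
theorem count_cross_matched_pairs_odd_general
    (p q : ℕ) (hpo : Odd p) (hqo : Odd q) :
    ∃ C : ℕ, ∀ (n bn : ℕ), 0 < n → 0 < bn → ∀ (i₁ i₂ : ℤ),
      1 ≤ i₁ → i₁ ≤ (n : ℤ) → 1 ≤ i₂ → i₂ ≤ (n : ℤ) → i₁ ≠ i₂ →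
      2 * i₁ ≠ (n : ℤ) + 1 → 2 * i₂ ≠ (n : ℤ) + 1 →
      Nat.card {J : (Fin p → ℤ) × (Fin q → ℤ) //
        (∀ k, J.1 k ≠ 0 ∧ |J.1 k| ≤ (bn : ℤ)) ∧
        (∀ k, J.2 k ≠ 0 ∧ |J.2 k| ≤ (bn : ℤ)) ∧
        (∑ k : Fin p, (-1 : ℤ) ^ ((k : ℕ) + 1) * J.1 k) = 2 * i₁ - 1 - (n : ℤ) ∧
        (∑ k : Fin q, (-1 : ℤ) ^ ((k : ℕ) + 1) * J.2 k) = 2 * i₂ - 1 - (n : ℤ) ∧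
        (∀ v : ℤ,
          (Finset.univ.filter (fun k : Fin p => J.1 k = v)).card +
            (Finset.univ.filter (fun k : Fin q => J.2 k = v)).card = 0 ∨
          (Finset.univ.filter (fun k : Fin p => J.1 k = v)).card +
            (Finset.univ.filter (fun k : Fin q => J.2 k = v)).card = 2) ∧
        (∃ (k : Fin p) (l : Fin q), J.1 k = J.2 l)} ≤
      C * bn ^ ((p + q - 4) / 2) := by
  classical
  refine ⟨(p + q) ^ (p + q) * 3 ^ ((p + q - 4) / 2), fun n bn _ hbn i₁ i₂ _ _ _ _ hi _ _ => ?_⟩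
  let sign (m : ℕ) (k : Fin m) : ℤ := (-1) ^ ((k : ℕ) + 1)
  let α := Sum.elim (sign p) (0 : Fin q → ℤ)
  let β := Sum.elim (0 : Fin p → ℤ) (sign q)
  have hα : ∑ t, α t = -1 := by
    simp [α, sign, Fintype.sum_sum_type, sum_neg_one_pow_succ_of_odd hpo]
  have hβ : ∑ t, β t = -1 := by
    simp [β, sign, Fintype.sum_sum_type, sum_neg_one_pow_succ_of_odd hqo]
  calc _ ≤ #(pairedSolutions α β (2 * i₁ - 1 - n) (2 * i₂ - 1 - n) bn) := by
        rw [← Nat.card_eq_finsetCard]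
        exact Nat.card_le_card_of_injective (fun J => ⟨Sum.elim J.1.1 J.1.2,
          sum_elim_mem_pairedSolutions (fun k => (J.2.1 k).2) (fun l => (J.2.2.1 l).2)
            J.2.2.2.1 J.2.2.2.2.1 J.2.2.2.2.2.1⟩) fun J J' h =>
          Subtype.ext ((Equiv.sumArrowEquivProdArrow _ _ ℤ).symm.injective (congrArg Subtype.val h))
    _ ≤ (p + q) ^ (p + q) * (2 * bn + 1) ^ ((p + q - 4) / 2) := by
        simpa using card_pairedSolutions_le (hα.trans hβ.symm) (by rw [hα]; norm_num)
          (by omega : 2 * i₁ - 1 - (n : ℤ) ≠ 2 * i₂ - 1 - n) bn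
    _ ≤ _ := by
        rw [mul_assoc, ← mul_pow]
        gcongr
        omega

/-- Counting bound: pairs `(J₁,J₂) ∈ A_{p,i₁} × A_{q,i₂}` (odd `p,q ≥ 3`) in which
every value of the combined multiset has multiplicity exactly `2` and the two
multisets intersect, with `2i₁ ≠ n+1`, `2i₂ ≠ n+1`, `i₁ ≠ i₂`, number at most
`C · bn^((p+q-4)/2)` with `C = C(p,q)`. -/
theorem count_cross_matched_pairs_odd
    (p q : ℕ) (hp : 3 ≤ p) (hpo : Odd p) (hq : 3 ≤ q) (hqo : Odd q) :
    ∃ C : ℕ, ∀ (n bn : ℕ), 0 < n → 0 < bn → ∀ (i₁ i₂ : ℤ),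
      1 ≤ i₁ → i₁ ≤ (n : ℤ) → 1 ≤ i₂ → i₂ ≤ (n : ℤ) → i₁ ≠ i₂ →
      2 * i₁ ≠ (n : ℤ) + 1 → 2 * i₂ ≠ (n : ℤ) + 1 →
      Nat.card {J : (Fin p → ℤ) × (Fin q → ℤ) //
        (∀ k, J.1 k ≠ 0 ∧ |J.1 k| ≤ (bn : ℤ)) ∧
        (∀ k, J.2 k ≠ 0 ∧ |J.2 k| ≤ (bn : ℤ)) ∧
        (∑ k : Fin p, (-1 : ℤ) ^ ((k : ℕ) + 1) * J.1 k) = 2 * i₁ - 1 - (n : ℤ) ∧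
        (∑ k : Fin q, (-1 : ℤ) ^ ((k : ℕ) + 1) * J.2 k) = 2 * i₂ - 1 - (n : ℤ) ∧
        (∀ v : ℤ,
          (Finset.univ.filter (fun k : Fin p => J.1 k = v)).card +
            (Finset.univ.filter (fun k : Fin q => J.2 k = v)).card = 0 ∨
          (Finset.univ.filter (fun k : Fin p => J.1 k = v)).card +
            (Finset.univ.filter (fun k : Fin q => J.2 k = v)).card = 2) ∧
        (∃ (k : Fin p) (l : Fin q), J.1 k = J.2 l)} ≤
      C * bn ^ ((p + q - 4) / 2) :=
  count_cross_matched_pairs_odd_general p q hpo hqo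
end

section
/- Let p ≥ 2 be even. Define B_{P₂} = {(J¹, J²) ∈ A_p × A_p : the multisets S_{J¹} and S_{J²} intersect, and every element of S_{J¹} ∪ S_{J²} has multiplicity ≥ 2}, where A_p = {(j_1,…,j_p) ∈ {±1,…,±b_n}^p : Σ_k (-1)^k j_k = 0}. Then |B_{P₂}| = O(b_n^{p−1}), i.e., there is a constant C depending only on p with |B_{P₂}| ≤ C b_n^{p−1} for all n. -/
/-!
Put `f = Sum.elim J¹ J²`, a function on `2p` indices. Since no value of `f` is taken exactly
once, `f` takes at most `p` distinct values. If it takes at most `p - 1` of them, `f` is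
determined by its pattern (which value each coordinate carries, `≤ C(p)` choices) and a table
of `p - 1` values in `[-b, b]`. If it takes exactly `p` values, every value is taken exactly
twice; a value shared by `J¹` and `J²` then occurs exactly once in `J¹`, so it can be dropped
from the table and recovered from the alternating-sum relation of `J¹`. Either way
`|B_{P₂}| ≤ C(p) (2b + 1)^(p-1)`.
-/

open Finset

namespace BP2

section Fibers

variable {ι α : Type*} [Fintype ι] [DecidableEq α] {f : ι → α}

theorem sum_card_fiber_image (f : ι → α) :
    ∑ v ∈ univ.image f, #{i | f i = v} = Fintype.card ι :=
  (card_eq_sum_card_fiberwise fun i _ => mem_image_of_mem f (mem_univ i)).symm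

theorem two_le_card_fiber (hf : ∀ v, #{i | f i = v} ≠ 1) {v : α} (hv : v ∈ univ.image f) :
    2 ≤ #{i | f i = v} := by
  obtain ⟨i, -, rfl⟩ := mem_image.1 hv
  have hpos : 0 < #{j | f j = f i} := card_pos.2 ⟨i, by simp⟩
  have := hf (f i)
  omega

theorem two_mul_card_image_le (hf : ∀ v, #{i | f i = v} ≠ 1) :
    2 * #(univ.image f) ≤ Fintype.card ι := by
  rw [← sum_card_fiber_image f, mul_comm, ← smul_eq_mul, ← sum_const]
  exact sum_le_sum fun v hv => two_le_card_fiber hf hv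

theorem card_fiber_eq_two (hf : ∀ v, #{i | f i = v} ≠ 1)
    (hcard : Fintype.card ι ≤ 2 * #(univ.image f)) {v : α} (hv : v ∈ univ.image f) :
    #{i | f i = v} = 2 := by
  by_contra hne
  have hlt : ∑ _u ∈ univ.image f, 2 < ∑ u ∈ univ.image f, #{i | f i = u} :=
    sum_lt_sum (fun u hu => two_le_card_fiber hf hu)
      ⟨v, hv, (two_le_card_fiber hf hv).lt_of_ne' hne⟩
  rw [sum_const, smul_eq_mul, sum_card_fiber_image] at hlt
  omega

end Fibers

theorem card_fiber_sumElim {ι κ α : Type*} [Fintype ι] [Fintype κ] [DecidableEq α]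
    (g : ι → α) (h : κ → α) (v : α) :
    #{i | Sum.elim g h i = v} = #{k | g k = v} + #{l | h l = v} := by
  rw [← card_disjSum]
  congr 1
  ext (k | l) <;> simp

theorem exists_fin_cover {α : Type*} [DecidableEq α] {m : ℕ} (W : Finset α) (d : α)
    (hW : #W ≤ m) : ∃ w : Fin m → α, (∀ v ∈ W, ∃ n, w n = v) ∧ ∀ n, w n ∈ insert d W := by
  refine ⟨fun n => W.toList.getD n d, fun v hv => ?_, fun n => ?_⟩
  · have hlt : W.toList.idxOf v < #W := by
      rw [← length_toList]
      exact List.idxOf_lt_length_iff.2 (mem_toList.2 hv)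
    refine ⟨⟨_, hlt.trans_le hW⟩, ?_⟩
    change W.toList.getD _ d = v
    rw [List.getD_eq_getElem _ _ (by rwa [length_toList])]
    exact List.getElem_idxOf _
  · by_cases hn : (n : ℕ) < W.toList.length
    · change W.toList.getD n d ∈ _
      rw [List.getD_eq_getElem _ _ hn]
      exact mem_insert_of_mem (mem_toList.1 (List.getElem_mem _))
    · change W.toList.getD n d ∈ _
      rw [List.getD_eq_default _ _ (not_lt.1 hn)]
      exact mem_insert_self d W

theorem eq_of_sum_mul_eq_of_eq_of_ne {R κ : Type*} [CommRing R] [NoZeroDivisors R] [Fintype κ]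
    {a x y : κ → R} {k₀ : κ} (ha : a k₀ ≠ 0) (hsum : ∑ k, a k * x k = ∑ k, a k * y k)
    (hxy : ∀ k ≠ k₀, x k = y k) : x = y := by
  have hsingle : ∑ k, a k * (x k - y k) = a k₀ * (x k₀ - y k₀) :=
    Fintype.sum_eq_single k₀ fun k hk => by rw [hxy k hk, sub_self, mul_zero]
  have hzero : ∑ k, a k * (x k - y k) = 0 := by
    simp only [mul_sub, sum_sub_distrib, hsum, sub_self]
  have hk₀ : x k₀ = y k₀ :=
    sub_eq_zero.1 ((mul_eq_zero.1 (hsingle ▸ hzero)).resolve_left ha)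
  funext k
  by_cases hk : k = k₀
  · rw [hk, hk₀]
  · exact hxy k hk

section Code

variable {ι κ α : Type*} {m : ℕ}

/-- The coordinates with `c i = none` share a value that is missing from the table `w`; it is
recovered from the single left coordinate among them through a linear relation. -/
def IsCode (f : ι ⊕ κ → α) (c : ι ⊕ κ → Option (Fin m)) (w : Fin m → α) : Prop :=
  (∀ i n, c i = some n → f i = w n) ∧ (∀ i j, c i = none → c j = none → f i = f j) ∧
    ∀ i, c i = none → ∃! k, c (.inl k) = none

theorem eq_of_isCode {R : Type*} [CommRing R] [NoZeroDivisors R] [Fintype ι] {a : ι → R}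
    (ha : ∀ k, a k ≠ 0) {f g : ι ⊕ κ → R} {c : ι ⊕ κ → Option (Fin m)} {w : Fin m → R}
    (hf : IsCode f c w) (hg : IsCode g c w)
    (hsum : ∑ k, a k * f (.inl k) = ∑ k, a k * g (.inl k)) : f = g := by
  have hcoded : ∀ i, c i ≠ none → f i = g i := fun i hi => by
    obtain ⟨n, hn⟩ := Option.ne_none_iff_exists'.1 hi
    rw [hf.1 i n hn, hg.1 i n hn]
  funext i
  by_cases hi : c i = none
  · obtain ⟨k₀, hk₀, huniq⟩ := hf.2.2 i hi
    have hleft : (fun k => f (.inl k)) = fun k => g (.inl k) :=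
      eq_of_sum_mul_eq_of_eq_of_ne (ha k₀) hsum fun k hk => hcoded _ fun hk' => hk (huniq k hk')
    calc f i = f (.inl k₀) := hf.2.1 i _ hi hk₀
      _ = g (.inl k₀) := congrFun hleft k₀
      _ = g i := hg.2.1 _ _ hk₀ hi
  · exact hcoded i hi

variable [Fintype ι] [Fintype κ] [DecidableEq α]

theorem exists_card_erase_le [Infinite α] {f : ι ⊕ κ → α} (hf : ∀ v, #{i | f i = v} ≠ 1)
    (hcommon : ∃ k l, f (.inl k) = f (.inr l)) (hcard : Fintype.card (ι ⊕ κ) ≤ 2 * (m + 1)) :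
    ∃ v₀, #((univ.image f).erase v₀) ≤ m ∧ ∀ i, f i = v₀ → ∃! k, f (.inl k) = v₀ := by
  have himage := two_mul_card_image_le hf
  by_cases hsmall : #(univ.image f) ≤ m
  · obtain ⟨v₀, hv₀⟩ := Infinite.exists_notMem_finset (univ.image f)
    refine ⟨v₀, (card_erase_le).trans hsmall, fun i hi => ?_⟩
    exact absurd (hi ▸ mem_image_of_mem f (mem_univ i)) hv₀
  obtain ⟨k₀, l₀, hkl⟩ := hcommon
  classical
  have hv₀ : f (.inl k₀) ∈ univ.image f := mem_image_of_mem f (mem_univ _)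
  refine ⟨f (.inl k₀), by rw [card_erase_of_mem hv₀]; omega, fun _ _ => ⟨k₀, rfl, fun k hk => ?_⟩⟩
  have hsub : ({Sum.inl k₀, Sum.inr l₀} : Finset (ι ⊕ κ)) ⊆
      ({i | f i = f (.inl k₀)} : Finset (ι ⊕ κ)) := by
    simp [insert_subset_iff, hkl]
  have hfiber := eq_of_subset_of_card_le hsub
    ((card_fiber_eq_two hf (by omega) hv₀).trans_le (by simp))
  have hk : Sum.inl k ∈ ({i | f i = f (.inl k₀)} : Finset (ι ⊕ κ)) := by simp [hk]
  simpa [← hfiber] using hk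

theorem exists_isCode_of_card_erase_le (d : α) {f : ι ⊕ κ → α} {v₀ : α}
    (hcard : #((univ.image f).erase v₀) ≤ m) (hv₀ : ∀ i, f i = v₀ → ∃! k, f (.inl k) = v₀) :
    ∃ (c : ι ⊕ κ → Option (Fin m)) (w : Fin m → α),
      IsCode f c w ∧ ∀ n, w n ∈ insert d (univ.image f) := by
  obtain ⟨w, hcover, hw⟩ := exists_fin_cover _ d hcard
  have hcover' : ∀ i, f i ≠ v₀ → ∃ n, w n = f i := fun i hi =>
    hcover _ (mem_erase.2 ⟨hi, mem_image_of_mem f (mem_univ i)⟩)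
  classical
  refine ⟨fun i => if hi : f i = v₀ then none else some (hcover' i hi).choose, w,
    ⟨fun i n hn => ?_, fun i j hi hj => ?_, fun i hi => ?_⟩,
    fun n => insert_subset_insert d (erase_subset _ _) (hw n)⟩
  · dsimp only at hn
    split_ifs at hn with hi
    cases hn
    exact (hcover' i hi).choose_spec.symm
  · simp only [dite_eq_left_iff, reduceCtorEq, imp_false, not_not] at hi hj
    rw [hi, hj]
  · simp only [dite_eq_left_iff, reduceCtorEq, imp_false, not_not] at hi ⊢
    exact hv₀ i hi

end Code

theorem card_le_of_forall_isCode {ι κ : Type*} [Fintype ι] [Fintype κ] {a : ι → ℤ}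
    (ha : ∀ k, a k ≠ 0) (m b : ℕ) (P : (ι → ℤ) × (κ → ℤ) → Prop)
    (hP : ∀ J, P J → ∑ k, a k * J.1 k = 0 ∧ ∃ (c : ι ⊕ κ → Option (Fin m)) (w : Fin m → ℤ),
      IsCode (Sum.elim J.1 J.2) c w ∧ ∀ n, |w n| ≤ b) :
    Nat.card {J // P J} ≤ (m + 1) ^ (Fintype.card ι + Fintype.card κ) * (2 * b + 1) ^ m := by
  choose hsum c w hcw hw using fun J : {J // P J} => hP J.1 J.2
  let encode (J : {J // P J}) : (ι ⊕ κ → Option (Fin m)) × (Fin m → Icc (-(b : ℤ)) b) :=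
    (c J, fun n => ⟨w J n, mem_Icc.2 (abs_le.1 (hw J n))⟩)
  have hencode : Function.Injective encode := fun J J' hJJ' => by
    simp only [encode, Prod.mk.injEq, funext_iff, Subtype.mk.injEq] at hJJ'
    obtain ⟨hc, hw'⟩ := hJJ'
    have hJ := eq_of_isCode ha (hcw J) (funext hc ▸ funext hw' ▸ hcw J') (by simp [hsum])
    exact Subtype.ext
      (Prod.ext (funext fun k => congrFun hJ (.inl k)) (funext fun l => congrFun hJ (.inr l)))
  refine (Nat.card_le_card_of_injective encode hencode).trans_eq ?_
  classical
  rw [Nat.card_eq_fintype_card, Fintype.card_prod, Fintype.card_fun, Fintype.card_fun,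
    Fintype.card_option, Fintype.card_fin, Fintype.card_sum, Fintype.card_coe, Int.card_Icc]
  congr 2
  omega

end BP2

open BP2 in
theorem count_B_P2_bound_general (p : ℕ) :
    ∃ C : ℕ, ∀ bn : ℕ, 0 < bn →
      Nat.card {J : (Fin p → ℤ) × (Fin p → ℤ) //
        (∀ k, J.1 k ≠ 0 ∧ |J.1 k| ≤ (bn : ℤ)) ∧
        (∀ k, J.2 k ≠ 0 ∧ |J.2 k| ≤ (bn : ℤ)) ∧
        (∑ k : Fin p, (-1 : ℤ) ^ ((k : ℕ) + 1) * J.1 k) = 0 ∧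
        (∑ k : Fin p, (-1 : ℤ) ^ ((k : ℕ) + 1) * J.2 k) = 0 ∧
        (∃ (k l : Fin p), J.1 k = J.2 l) ∧
        (∀ v : ℤ,
          (Finset.univ.filter (fun k : Fin p => J.1 k = v)).card +
              (Finset.univ.filter (fun k : Fin p => J.2 k = v)).card = 0 ∨
          2 ≤ (Finset.univ.filter (fun k : Fin p => J.1 k = v)).card +
              (Finset.univ.filter (fun k : Fin p => J.2 k = v)).card)} ≤
      C * bn ^ (p - 1) := by
  refine ⟨(p + 1) ^ (2 * p) * 3 ^ (p - 1), fun bn hbn => ?_⟩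
  refine (card_le_of_forall_isCode (a := fun k : Fin p => (-1 : ℤ) ^ ((k : ℕ) + 1))
    (fun k => pow_ne_zero _ (by norm_num)) (p - 1) bn _ ?_).trans ?_
  · rintro J ⟨hJ₁, hJ₂, hsum, -, hcommon, hmult⟩
    obtain ⟨v₀, hcard, hv₀⟩ := exists_card_erase_le (f := Sum.elim J.1 J.2) (m := p - 1)
      (fun v => by rw [card_fiber_sumElim]; have := hmult v; omega) hcommon (by simp; omega)
    obtain ⟨c, w, hcw, hw⟩ := exists_isCode_of_card_erase_le 0 hcard hv₀
    refine ⟨hsum, c, w, hcw, fun n => ?_⟩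
    rcases mem_insert.1 (hw n) with h | h
    · simp [h]
    · obtain ⟨k | l, -, hkl⟩ := mem_image.1 h
      · exact hkl ▸ (hJ₁ k).2
      · exact hkl ▸ (hJ₂ l).2
  · have hbase : 2 * bn + 1 ≤ 3 * bn := by omega
    calc (p - 1 + 1) ^ (Fintype.card (Fin p) + Fintype.card (Fin p)) * (2 * bn + 1) ^ (p - 1)
        ≤ (p + 1) ^ (2 * p) * (3 * bn) ^ (p - 1) := by
          rw [Fintype.card_fin, ← two_mul]
          gcongr
          omega
      _ = (p + 1) ^ (2 * p) * 3 ^ (p - 1) * bn ^ (p - 1) := by ring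

/-- `|B_{P₂}| = O(b_n^{p-1})`: pairs `(J¹,J²) ∈ A_p × A_p` whose coordinate
multisets intersect and in which every value of the combined multiset has
multiplicity at least `2` number at most `C(p) · b_n^{p-1}`. -/
theorem count_B_P2_bound (p : ℕ) (hp : 2 ≤ p) (hpe : Even p) :
    ∃ C : ℕ, ∀ bn : ℕ, 0 < bn →
      Nat.card {J : (Fin p → ℤ) × (Fin p → ℤ) //
        (∀ k, J.1 k ≠ 0 ∧ |J.1 k| ≤ (bn : ℤ)) ∧
        (∀ k, J.2 k ≠ 0 ∧ |J.2 k| ≤ (bn : ℤ)) ∧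
        (∑ k : Fin p, (-1 : ℤ) ^ ((k : ℕ) + 1) * J.1 k) = 0 ∧
        (∑ k : Fin p, (-1 : ℤ) ^ ((k : ℕ) + 1) * J.2 k) = 0 ∧
        (∃ (k l : Fin p), J.1 k = J.2 l) ∧
        (∀ v : ℤ,
          (Finset.univ.filter (fun k : Fin p => J.1 k = v)).card +
              (Finset.univ.filter (fun k : Fin p => J.2 k = v)).card = 0 ∨
          2 ≤ (Finset.univ.filter (fun k : Fin p => J.1 k = v)).card +
              (Finset.univ.filter (fun k : Fin p => J.2 k = v)).card)} ≤
      C * bn ^ (p - 1) :=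
  count_B_P2_bound_general p
end

section
/- Let p ≥ 2 be even and define B_{P₄} ⊆ (A_p)⁴ as the set of quadruples (J¹, J², J³, J⁴) such that all four multisets pairwise intersect in a connected pattern (S_{J¹} ∩ S_{J²} ∩ S_{J³} ∩ S_{J⁴} ≠ ∅ in the sense that the quadruple is connected) and every element of S_{J¹} ∪ S_{J²} ∪ S_{J³} ∪ S_{J⁴} has multiplicity ≥ 2. Then |B_{P₄}| = o(b_n^{2p−2}) as b_n → ∞. -/
/-!
An element of `B_{P₄}` is determined by its pattern (which of its `4p` coordinates coincide),
of which there are boundedly many, together with its values on the classes of the pattern; these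
values form a kernel vector of the `4 × t` matrix of signed counts of each value in each row.
When every multiplicity is at least `2`, `t = 2p - E/2` with excess `E = Σ (multiplicity - 2)`,
so the kernel has dimension at most `2p - 3` once the rank is at least `3 - E/2`. That is a
counting argument on the hypergraph on the four rows whose edges are the sets of rows containing
a value: connectivity forces crossing edges, and each of them either brings a new independent
column or costs excess; since `p` is even every row of the matrix sums to zero, so a nonzero
column never stands alone in its row. Hence `2p - 3` coordinates and the pattern determine an
element, and `|B_{P₄}| = O(b_n ^ (2p - 3))`.
-/

open Finset Filter

theorem Submodule.exists_coords_determining {F ι : Type*} [Field F] [Finite ι] [Nonempty ι] :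
    ∀ (n : ℕ) (K : Submodule F (ι → F)), Module.finrank F K ≤ n →
      ∃ u : Fin n → ι, ∀ x ∈ K, (∀ i, x (u i) = 0) → x = 0
  | 0, K, hK => ⟨Fin.elim0, fun x hx _ => by
      rwa [Submodule.finrank_eq_zero.mp (Nat.le_zero.mp hK), Submodule.mem_bot] at hx⟩
  | n + 1, K, hK => by
    by_cases hbot : K = ⊥
    · exact ⟨fun _ => Classical.arbitrary ι, fun x hx _ => by rwa [hbot, Submodule.mem_bot] at hx⟩
    obtain ⟨y, hyK, hy⟩ := Submodule.exists_mem_ne_zero_of_ne_bot hbot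
    obtain ⟨i₀, hi₀⟩ := Function.ne_iff.mp hy
    set K' := K ⊓ LinearMap.ker (LinearMap.proj (R := F) (φ := fun _ : ι => F) i₀)
    have hlt : K' < K := inf_lt_left.mpr fun h => hi₀ (h hyK)
    obtain ⟨u, hu⟩ := exists_coords_determining n K'
      (by have := Submodule.finrank_lt_finrank_of_lt hlt; omega)
    exact ⟨Fin.cons i₀ u, fun x hx hxu => hu x ⟨hx, hxu 0⟩ fun i => hxu i.succ⟩

theorem Matrix.card_filter_ne_zero_ne_one_of_vecMul_eq_zero {ι κ F : Type*} [Fintype ι]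
    [Semiring F] [NoZeroDivisors F] [DecidableEq F] (M : Matrix ι κ F) {y : ι → F}
    (hy : Matrix.vecMul y M = 0) (j : κ) : #{i | M i j ≠ 0 ∧ y i ≠ 0} ≠ 1 := by
  intro h
  obtain ⟨i, hi⟩ := card_eq_one.mp h
  have hmem : i ∈ ({i | M i j ≠ 0 ∧ y i ≠ 0} : Finset ι) := hi ▸ mem_singleton_self i
  rw [mem_filter] at hmem
  have hsingle : Matrix.vecMul y M j = y i * M i j := by
    refine sum_eq_single i (fun i' _ hi' => ?_) (by simp)
    have : i' ∉ ({i | M i j ≠ 0 ∧ y i ≠ 0} : Finset ι) := by simpa [hi] using hi'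
    simp only [mem_filter, mem_univ, true_and, not_and_or, not_not] at this
    rcases this with h | h <;> simp [h]
  exact mul_ne_zero hmem.2.2 hmem.2.1 (hsingle ▸ congrFun hy j)

section Hypergraph

variable {X β : Type*} [Fintype X] [DecidableEq X] [Fintype β]

def IsConnectedFamily (R : β → Finset X) : Prop :=
  ∀ s : Finset X, s.Nonempty → s ≠ univ → ∃ b, (R b ∩ s).Nonempty ∧ ¬R b ⊆ s

-- In the application `R b` is the set of rows containing the value `b`, `T b` the set of rows in
-- which its signed count is nonzero, and `e b` its multiplicity minus `2`.
variable {R T : β → Finset X} {e : β → ℕ}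

-- Grow `U` from `U₀` by one crossing edge at a time: each edge is used at most once and pays `α`
-- for every vertex it adds.
theorem IsConnectedFamily.mul_card_compl_le_sum (hR : IsConnectedFamily R) (α : ℕ)
    {U₀ : Finset X} (hU₀ : U₀.Nonempty)
    (hcost : ∀ U, U₀ ⊆ U → ∀ b, (R b ∩ U).Nonempty → ¬R b ⊆ U → α * #(R b \ U) ≤ e b) :
    α * #U₀ᶜ ≤ ∑ b, e b := by
  classical
  suffices key : ∀ n U (B : Finset β), #Uᶜ = n → U₀ ⊆ U → (∀ b ∈ B, R b ⊆ U) →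
      α * #U ≤ α * #U₀ + ∑ b ∈ B, e b → α * #U₀ᶜ ≤ ∑ b, e b from
    key _ U₀ ∅ rfl le_rfl (by simp) (by simp)
  intro n
  induction n using Nat.strong_induction_on with
  | _ n ih =>
  intro U B hn hU hB hsum
  by_cases hUu : U = univ
  · subst hUu
    have hB : ∑ b ∈ B, e b ≤ ∑ b, e b := sum_le_sum_of_subset (subset_univ B)
    rw [card_compl, Nat.mul_sub, ← card_univ]
    omega
  obtain ⟨b, hbU, hbU'⟩ := hR U (hU₀.mono hU) hUu
  have hcard : #(U ∪ R b) = #U + #(R b \ U) := by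
    rw [← union_sdiff_self_eq_union, card_union_of_disjoint disjoint_sdiff]
  have hnew : 0 < #(R b \ U) := card_pos.mpr (sdiff_nonempty.mpr hbU')
  have hle : #(U ∪ R b) ≤ Fintype.card X := card_le_univ _
  refine ih _ ?_ (U ∪ R b) (insert b B) rfl (hU.trans subset_union_left) ?_ ?_
  · rw [← hn, card_compl, card_compl]
    omega
  · intro b' hb'
    rcases mem_insert.mp hb' with rfl | h
    · exact subset_union_right
    · exact (hB b' h).trans subset_union_left
  · rw [sum_insert fun h => hbU' (hB b h), hcard, mul_add]
    have := hcost U hU b hbU hbU'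
    omega

theorem IsConnectedFamily.card_sub_one_le_sum [Nonempty X] (hR : IsConnectedFamily R)
    (he : ∀ b, 2 * #(R b) ≤ e b + 3) : Fintype.card X - 1 ≤ ∑ b, e b := by
  obtain ⟨x⟩ := ‹Nonempty X›
  have := hR.mul_card_compl_le_sum (e := e) 1 (singleton_nonempty x) fun U _ b hbU hbU' => by
    have := card_sdiff_add_card_inter (R b) U
    have := card_pos.mpr hbU
    have := card_pos.mpr (sdiff_nonempty.mpr hbU')
    have := he b
    omega
  rwa [card_compl, card_singleton, one_mul] at this

theorem IsConnectedFamily.two_mul_card_compl_le_sum (hR : IsConnectedFamily R)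
    (hTR : ∀ b, T b ⊆ R b) (he : ∀ b, 2 * #(R b) ≤ e b + 2 + #(T b)) {U₀ : Finset X}
    (hU₀ : U₀.Nonempty) (hTU : ∀ b, T b ⊆ U₀) (hT : ∀ b, #(T b) ≠ 1) :
    2 * #U₀ᶜ ≤ ∑ b, e b :=
  hR.mul_card_compl_le_sum 2 hU₀ fun U hU b hbU _ => by
    have := card_sdiff_add_card_inter (R b) U
    have := card_pos.mpr hbU
    have := card_le_card (subset_inter (hTR b) ((hTU b).trans hU))
    have := he b
    have := hT b
    omega

theorem IsConnectedFamily.eq_univ_of_sum_eq_zero (hR : IsConnectedFamily R)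
    (hTR : ∀ b, T b ⊆ R b) (he : ∀ b, 2 * #(R b) ≤ e b + 2 + #(T b)) (hE : ∑ b, e b = 0)
    {P : Finset X} (hP : P.Nonempty) (hbal : ∀ b, #(T b ∩ P) ≠ 1) : P = univ := by
  by_contra hPu
  obtain ⟨b, ⟨x, hx⟩, hbP⟩ := hR P hP hPu
  obtain ⟨y, hyR, hyP⟩ := not_subset.mp hbP
  rw [mem_inter] at hx
  have hxy : x ≠ y := fun h => hyP (h ▸ hx.2)
  have hRxy : {x, y} ⊆ R b := insert_subset hx.1 (singleton_subset_iff.mpr hyR)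
  have hcard := card_le_card hRxy
  have := card_le_card (hTR b)
  have := he b
  rw [card_pair hxy] at hcard
  have heb : e b = 0 := (sum_eq_zero_iff.mp hE) b (mem_univ b)
  have hR2 : R b = {x, y} := (eq_of_subset_of_card_le hRxy (by rw [card_pair hxy]; omega)).symm
  have hT : T b = {x, y} := eq_of_subset_of_card_le (hR2 ▸ hTR b) (by rw [card_pair hxy]; omega)
  apply hbal b
  rw [hT, insert_inter_of_mem hx.2, singleton_inter_of_notMem hyP, insert_empty, card_singleton]

theorem IsConnectedFamily.three_le_sum (hX : 4 ≤ Fintype.card X) (hR : IsConnectedFamily R)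
    (hTR : ∀ b, T b ⊆ R b) (he : ∀ b, 2 * #(R b) ≤ e b + 2 + #(T b)) {W : Finset X}
    (hW : W.Nonempty) (hT : ∀ b, T b = ∅ ∨ T b = W) {b₀ b₁ : β} (hb : b₀ ≠ b₁)
    (h₀ : T b₀ = W) (h₁ : T b₁ = W) : 3 ≤ ∑ b, e b := by
  have hWR (b : β) (hb : T b = W) : #W ≤ #(R b) := hb ▸ card_le_card (hTR b)
  have hcardT (b : β) : #(T b) = 0 ∨ #(T b) = #W := (hT b).imp (by simp [·]) (by simp [·])
  have hcompl : #Wᶜ = Fintype.card X - #W := card_compl W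
  obtain h | h | h | h : #W = 1 ∨ #W = 2 ∨ #W = 3 ∨ 4 ≤ #W := by
    have := hW.card_pos; omega
  · have : Nonempty X := hW.to_subtype.map Subtype.val
    have := hR.card_sub_one_le_sum (e := e) fun b => by have := he b; have := hcardT b; omega
    omega
  · have := hR.two_mul_card_compl_le_sum hTR he hW
      (fun b => (hT b).elim (· ▸ empty_subset W) (·.le)) (fun b => by have := hcardT b; omega)
    omega
  · obtain ⟨u, hu, hu'⟩ := hR W hW fun h' => by rw [h', card_univ] at h; omega
    have heu : 2 ≤ e u := by
      have := card_sdiff_add_card_inter (R u) W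
      have := card_pos.mpr hu
      have := card_pos.mpr (sdiff_nonempty.mpr hu')
      have heu := he u
      rcases hT u with h' | h'
      · simp only [h', card_empty] at heu; omega
      · rw [h'] at heu
        have := card_lt_card (ssubset_of_subset_of_ne (h' ▸ hTR u) fun h'' => hu' h''.ge)
        omega
    obtain ⟨b, hb, hbu⟩ : ∃ b, T b = W ∧ b ≠ u := by
      by_cases h' : b₀ = u
      · exact ⟨b₁, h₁, h' ▸ hb.symm⟩
      · exact ⟨b₀, h₀, h'⟩
    have heb : 1 ≤ e b := by have := hWR b hb; have := he b; rw [hb] at this; omega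
    have := add_le_sum (fun b _ => Nat.zero_le (e b)) (mem_univ u) (mem_univ b) hbu.symm
    omega
  · have he₀ := he b₀
    have he₁ := he b₁
    have := hWR b₀ h₀
    have := hWR b₁ h₁
    rw [h₀] at he₀
    rw [h₁] at he₁
    have := add_le_sum (fun b _ => Nat.zero_le (e b)) (mem_univ b₀) (mem_univ b₁) hb
    omega

end Hypergraph

namespace IndexArray

variable {ι : Type*} [Fintype ι] {p : ℕ} (J : ι → Fin p → ℤ)

def alternatingSum {R : Type*} [Ring R] (x : Fin p → R) : R :=
  ∑ k : Fin p, (-1) ^ ((k : ℕ) + 1) * x k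

def rowCount (m : ι) (v : ℤ) : ℕ := #{k | J m k = v}

def signedCount (m : ι) (v : ℤ) : ℤ := ∑ k with J m k = v, (-1) ^ ((k : ℕ) + 1)

def multiplicity (v : ℤ) : ℕ := ∑ m, rowCount J m v

def rowSupport (v : ℤ) : Finset ι := {m | ∃ k, J m k = v}

def signSupport (v : ℤ) : Finset ι := {m | signedCount J m v ≠ 0}

abbrev values : Set ℤ := Set.range (Function.uncurry J)

def toValue : ι × Fin p → values J := Set.rangeFactorization (Function.uncurry J)

def signMatrix : Matrix ι (values J) ℚ := fun m v => signedCount J m v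

def excess : ℕ := ∑ v : values J, (multiplicity J v - 2)

structure IsConnectedPaired [DecidableEq ι] : Prop where
  connected : IsConnectedFamily fun v : values J => rowSupport J v
  two_le_multiplicity (v : values J) : 2 ≤ multiplicity J v

variable {J}

theorem sum_values_sum_filter {M : Type*} [AddCommMonoid M] (m : ι) (f : Fin p → M) :
    ∑ v : values J, ∑ k with J m k = v, f k = ∑ k, f k := by
  rw [← sum_fiberwise univ (fun k => toValue J (m, k)) f]
  refine sum_congr rfl fun v _ => ?_
  congr 1
  ext k
  simp [toValue, Subtype.ext_iff, Set.rangeFactorization]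

theorem signSupport_subset_rowSupport (v : ℤ) : signSupport J v ⊆ rowSupport J v := by
  intro m hm
  simp only [signSupport, rowSupport, mem_filter, mem_univ, true_and] at hm ⊢
  by_contra! h
  exact hm (sum_eq_zero fun k hk => absurd (mem_filter.mp hk).2 (h k))

theorem two_mul_card_rowSupport_le (v : ℤ) :
    2 * #(rowSupport J v) ≤ multiplicity J v + #(signSupport J v) := by
  simp only [rowSupport, signSupport, multiplicity, card_filter, mul_sum, ← sum_add_distrib]
  refine sum_le_sum fun m _ => ?_
  have hodd : rowCount J m v = 1 → signedCount J m v ≠ 0 := fun h1 => by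
    obtain ⟨k, hk⟩ := card_eq_one.mp h1
    rw [signedCount, hk, sum_singleton]
    exact pow_ne_zero _ (by norm_num)
  have hpos : (∃ k, J m k = v) → 0 < rowCount J m v := fun ⟨k, hk⟩ =>
    card_pos.mpr ⟨k, by simp [hk]⟩
  split_ifs with hR hT hT
  · have := hpos hR; omega
  · have := hpos hR; have := mt hodd hT; omega
  all_goals omega

theorem sum_signedCount_eq_zero (hp : Even p) (m : ι) :
    ∑ v : values J, signedCount J m v = 0 := by
  simp only [signedCount, sum_values_sum_filter m, pow_succ, mul_neg_one, sum_neg_distrib,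
    Fin.sum_univ_eq_sum_range (fun i => (-1 : ℤ) ^ i), neg_one_geom_sum, if_pos hp, neg_zero]

theorem exists_ne_signedCount_ne_zero (hp : Even p) {m : ι} {v₀ : values J}
    (h : signedCount J m v₀ ≠ 0) : ∃ v₁, v₁ ≠ v₀ ∧ signedCount J m v₁ ≠ 0 := by
  by_contra! hall
  apply h
  rw [← sum_signedCount_eq_zero hp m]
  exact (sum_eq_single v₀ (fun v _ hv => hall v hv) (by simp)).symm

theorem excess_add_two_mul_card (hm : ∀ v : values J, 2 ≤ multiplicity J v) :
    excess J + 2 * Fintype.card (values J) = Fintype.card ι * p := by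
  have hsum : ∑ v : values J, multiplicity J v = Fintype.card ι * p := by
    simp only [multiplicity, rowCount]
    rw [sum_comm]
    simp only [card_eq_sum_ones, sum_values_sum_filter]
    simp
  rw [excess, Fintype.card_eq_sum_ones, mul_sum, ← sum_add_distrib, ← hsum]
  exact sum_congr rfl fun v _ => by have := hm v; omega

theorem signMatrix_mulVec_apply (x : values J → ℚ) (m : ι) :
    (signMatrix J).mulVec x m = alternatingSum fun k => x (toValue J (m, k)) := by
  simp only [Matrix.mulVec, dotProduct, signMatrix, signedCount, alternatingSum, Int.cast_sum,
    Int.cast_pow, Int.cast_neg, Int.cast_one, sum_mul]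
  rw [← sum_values_sum_filter m]
  refine sum_congr rfl fun v _ => sum_congr rfl fun k hk => ?_
  rw [show toValue J (m, k) = v from Subtype.ext (mem_filter.mp hk).2]

theorem signSupport_eq_filter (v : values J) :
    signSupport J v = ({m | signMatrix J m v ≠ 0} : Finset ι) := by
  ext m
  simp [signSupport, signMatrix]

section Rank

variable [DecidableEq ι]

theorem IsConnectedPaired.two_mul_card_rowSupport_le (hJ : IsConnectedPaired J) (v : values J) :
    2 * #(rowSupport J v) ≤ (multiplicity J v - 2) + 2 + #(signSupport J v) := by
  have := IndexArray.two_mul_card_rowSupport_le (J := J) v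
  have := hJ.two_le_multiplicity v
  omega

theorem two_mul_card_sub_one_le_excess [Nonempty ι] (hJ : IsConnectedPaired J)
    (hT : ∀ v : values J, signSupport J v = ∅) : 2 * (Fintype.card ι - 1) ≤ excess J := by
  obtain ⟨m₀⟩ := ‹Nonempty ι›
  have := hJ.connected.two_mul_card_compl_le_sum (e := fun v : values J => multiplicity J v - 2)
    (fun v => signSupport_subset_rowSupport v) hJ.two_mul_card_rowSupport_le
    (singleton_nonempty m₀) (fun v => by simp [hT v]) (fun v => by simp [hT v])
  rwa [card_compl, card_singleton] at this

theorem two_mul_card_sub_one_le_excess_of_rank_eq_zero [Nonempty ι] (hJ : IsConnectedPaired J)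
    (h : (signMatrix J).rank = 0) : 2 * (Fintype.card ι - 1) ≤ excess J := by
  rw [Matrix.rank_eq_finrank_span_cols, Submodule.finrank_eq_zero] at h
  refine two_mul_card_sub_one_le_excess hJ fun v => ?_
  have hcol : (signMatrix J).col v = 0 := by
    simpa [h] using Submodule.subset_span (R := ℚ) (Set.mem_range_self (f := (signMatrix J).col) v)
  rw [signSupport_eq_filter, filter_eq_empty_iff]
  exact fun m _ => not_not.mpr (congrFun hcol m)

theorem three_le_excess_of_rank_le_one (hι : 4 ≤ Fintype.card ι) (hp : Even p)
    (hJ : IsConnectedPaired J) (h : (signMatrix J).rank ≤ 1) : 3 ≤ excess J := by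
  rw [Matrix.rank_eq_finrank_span_cols, finrank_le_one_iff] at h
  obtain ⟨w, hw⟩ := h
  set W : Finset ι := {m | (w : ι → ℚ) m ≠ 0}
  have hT (v : values J) : signSupport J v = ∅ ∨ signSupport J v = W := by
    obtain ⟨c, hc⟩ := hw ⟨_, Submodule.subset_span (Set.mem_range_self v)⟩
    have hcol (m : ι) : signMatrix J m v = c * (w : ι → ℚ) m := by
      simpa using (congrFun (congrArg Subtype.val hc) m).symm
    rw [signSupport_eq_filter]
    by_cases hc0 : c = 0
    · left; ext m; simp [hcol, hc0]
    · right; ext m; simp [hcol, hc0, W]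
  by_cases hall : ∀ v : values J, signSupport J v = ∅
  · have : Nonempty ι := Fintype.card_pos_iff.mp (by omega)
    have := two_mul_card_sub_one_le_excess hJ hall
    omega
  obtain ⟨v₀, hv₀⟩ := not_forall.mp hall
  have h₀ : signSupport J v₀ = W := (hT v₀).resolve_left hv₀
  obtain ⟨m, hm⟩ := nonempty_iff_ne_empty.mpr hv₀
  -- the rows of `signMatrix J` sum to zero, so `v₀` is not alone in row `m`
  obtain ⟨v₁, hne, hv₁⟩ := exists_ne_signedCount_ne_zero hp (mem_filter.mp hm).2
  have h₁ : signSupport J v₁ = W :=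
    (hT v₁).resolve_left (ne_empty_of_mem (mem_filter.mpr ⟨mem_univ m, hv₁⟩))
  exact hJ.connected.three_le_sum (e := fun v : values J => multiplicity J v - 2) hι
    (fun v => signSupport_subset_rowSupport v) hJ.two_mul_card_rowSupport_le
    (h₀ ▸ nonempty_iff_ne_empty.mpr hv₀) hT hne.symm h₀ h₁

theorem card_sub_one_le_rank_of_excess_eq_zero [Nonempty ι] (hJ : IsConnectedPaired J)
    (h : excess J = 0) : Fintype.card ι - 1 ≤ (signMatrix J).rank := by
  obtain ⟨m₀⟩ := ‹Nonempty ι›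
  set A := (signMatrix J).transpose.mulVecLin
  -- the support of a left kernel vector meets no sign support in exactly one row, so it is empty
  -- or everything
  have hinj : Function.Injective
      ((LinearMap.proj m₀ : (ι → ℚ) →ₗ[ℚ] ℚ).comp (LinearMap.ker A).subtype) := by
    refine (injective_iff_map_eq_zero _).mpr fun ⟨y, hy⟩ hy₀ => ?_
    have hvec : Matrix.vecMul y (signMatrix J) = 0 := by
      rw [← Matrix.mulVec_transpose]; exact hy
    set P : Finset ι := {m | y m ≠ 0}
    have hP : P = ∅ := by
      by_contra hne
      have := hJ.connected.eq_univ_of_sum_eq_zero (e := fun v : values J => multiplicity J v - 2)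
        (fun v => signSupport_subset_rowSupport v) hJ.two_mul_card_rowSupport_le h
        (nonempty_iff_ne_empty.mpr hne) fun v => by
          rw [signSupport_eq_filter, ← filter_and]
          exact Matrix.card_filter_ne_zero_ne_one_of_vecMul_eq_zero _ hvec v
      exact (mem_filter.mp (this ▸ mem_univ m₀ : m₀ ∈ P)).2 hy₀
    ext m
    by_contra hm
    exact (filter_eq_empty_iff.mp hP) (mem_univ m) hm
  have h1 := LinearMap.finrank_le_finrank_of_injective hinj
  have h2 := LinearMap.finrank_range_add_finrank_ker A
  rw [Module.finrank_self] at h1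
  rw [Module.finrank_fintype_fun_eq_card] at h2
  rw [← Matrix.rank_transpose]
  change Matrix.rank _ + _ = _ at h2
  omega

end Rank

theorem finrank_ker_signMatrix_le (hp : Even p) {J : Fin 4 → Fin p → ℤ}
    (hJ : IsConnectedPaired J) :
    Module.finrank ℚ (LinearMap.ker (signMatrix J).mulVecLin) ≤ 2 * p - 3 := by
  have hnull := LinearMap.finrank_range_add_finrank_ker (signMatrix J).mulVecLin
  rw [Module.finrank_fintype_fun_eq_card] at hnull
  change Matrix.rank _ + _ = _ at hnull
  have hE := excess_add_two_mul_card hJ.two_le_multiplicity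
  have h0 := two_mul_card_sub_one_le_excess_of_rank_eq_zero hJ
  have h1 := three_le_excess_of_rank_le_one (by simp) hp hJ
  have h2 := card_sub_one_le_rank_of_excess_eq_zero hJ
  simp only [Fintype.card_fin] at hE h0 h2
  omega

theorem mem_map_funLeft_ker {δ : ι × Fin p → ℚ} (hδ : δ.FactorsThrough (Function.uncurry J))
    (hsum : ∀ m, alternatingSum (fun k => δ (m, k)) = 0) :
    δ ∈ (LinearMap.ker (signMatrix J).mulVecLin).map (LinearMap.funLeft ℚ ℚ (toValue J)) := by
  have hsplit (a : ι × Fin p) : δ (Set.rangeSplitting _ (toValue J a)) = δ a :=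
    hδ (Set.apply_rangeSplitting (Function.uncurry J) _)
  refine Submodule.mem_map.mpr ⟨δ ∘ Set.rangeSplitting (Function.uncurry J), ?_, funext hsplit⟩
  rw [LinearMap.mem_ker]
  ext m
  simpa [signMatrix_mulVec_apply, hsplit] using hsum m

theorem exists_determining_positions (hp : 2 ≤ p) (hpe : Even p) {J₀ : Fin 4 → Fin p → ℤ}
    (hJ₀ : IsConnectedPaired J₀) :
    ∃ u : Fin (2 * p - 3) → Fin 4 × Fin p, ∀ J J' : Fin 4 → Fin p → ℤ,
      (Function.uncurry J).FactorsThrough (Function.uncurry J₀) →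
      (Function.uncurry J').FactorsThrough (Function.uncurry J₀) →
      (∀ m, alternatingSum (J m) = 0) → (∀ m, alternatingSum (J' m) = 0) →
      (∀ i, Function.uncurry J (u i) = Function.uncurry J' (u i)) → J = J' := by
  have : Nonempty (Fin 4 × Fin p) := ⟨(0, ⟨0, by omega⟩)⟩
  obtain ⟨u, hu⟩ := Submodule.exists_coords_determining (F := ℚ) (ι := Fin 4 × Fin p) _ _
    ((Submodule.finrank_map_le _ _).trans (finrank_ker_signMatrix_le hpe hJ₀))
  refine ⟨u, fun J J' hJ hJ' hsum hsum' hagree => ?_⟩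
  have hδ := hu (fun a => (Function.uncurry J a - Function.uncurry J' a : ℚ))
    (mem_map_funLeft_ker (fun a b hab => by simp only [hJ hab, hJ' hab]) fun m => by
      have : ((alternatingSum (J m) - alternatingSum (J' m) : ℤ) : ℚ) = 0 := by
        rw [hsum, hsum', sub_zero, Int.cast_zero]
      simpa [alternatingSum, mul_sub, sum_sub_distrib] using this)
    (fun i => by simp [hagree i])
  funext m k
  exact_mod_cast sub_eq_zero.mp (congrFun hδ (m, k))

-- `B_{P₄}` for `b_n = bn`
def pairedConnectedQuadruples (p bn : ℕ) : Set (Fin 4 → Fin p → ℤ) :=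
  {J | (∀ m k, J m k ≠ 0 ∧ |J m k| ≤ (bn : ℤ)) ∧ (∀ m, alternatingSum (J m) = 0) ∧
    (∀ s : Finset (Fin 4), s.Nonempty → s ≠ univ →
      ∃ m ∈ s, ∃ m' ∈ univ \ s, ∃ k l, J m k = J m' l) ∧
    (∀ v : ℤ, multiplicity J v = 0 ∨ 2 ≤ multiplicity J v)}

def pattern (J : ι → Fin p → ℤ) (a b : ι × Fin p) : Prop :=
  Function.uncurry J a = Function.uncurry J b

theorem isConnectedPaired_of_mem {bn : ℕ} {J : Fin 4 → Fin p → ℤ}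
    (hJ : J ∈ pairedConnectedQuadruples p bn) : IsConnectedPaired J where
  connected s hs hsu := by
    obtain ⟨m, hm, m', hm', k, l, hkl⟩ := hJ.2.2.1 s hs hsu
    refine ⟨toValue J (m, k), ⟨m, mem_inter.mpr ⟨?_, hm⟩⟩, fun hsub => (mem_sdiff.mp hm').2 (hsub ?_)⟩
    · exact mem_filter.mpr ⟨mem_univ m, k, rfl⟩
    · exact mem_filter.mpr ⟨mem_univ m', l, hkl.symm⟩
  two_le_multiplicity v := by
    refine (hJ.2.2.2 v).resolve_left fun h0 => ?_
    obtain ⟨⟨m, k⟩, hv⟩ := v.2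
    have : rowCount J m v = 0 := (sum_eq_zero_iff.mp h0) m (mem_univ m)
    exact (card_pos.mpr ⟨k, mem_filter.mpr ⟨mem_univ k, hv⟩⟩).ne' this

theorem exists_determining_positions_of_pattern (hp : 2 ≤ p) (hpe : Even p) (bn : ℕ)
    (P : Fin 4 × Fin p → Fin 4 × Fin p → Prop) :
    ∃ u : Fin (2 * p - 3) → Fin 4 × Fin p, ∀ J ∈ pairedConnectedQuadruples p bn,
      ∀ J' ∈ pairedConnectedQuadruples p bn, pattern J = P → pattern J' = P →
        (∀ i, Function.uncurry J (u i) = Function.uncurry J' (u i)) → J = J' := by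
  by_cases hP : ∃ J₀ ∈ pairedConnectedQuadruples p bn, pattern J₀ = P
  · obtain ⟨J₀, hJ₀, rfl⟩ := hP
    obtain ⟨u, hu⟩ := exists_determining_positions hp hpe (isConnectedPaired_of_mem hJ₀)
    exact ⟨u, fun J hJ J' hJ' hJP hJ'P =>
      hu J J' (fun a b hab => Eq.mpr (congrFun₂ hJP a b) hab)
        (fun a b hab => Eq.mpr (congrFun₂ hJ'P a b) hab) hJ.2.1 hJ'.2.1⟩
  · exact ⟨fun _ => (0, ⟨0, by omega⟩), fun J hJ _ _ hJP _ _ => (hP ⟨J, hJ, hJP⟩).elim⟩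

theorem card_pairedConnectedQuadruples_le (hp : 2 ≤ p) (hpe : Even p) (bn : ℕ) :
    Nat.card (pairedConnectedQuadruples p bn) ≤
      Nat.card (Fin 4 × Fin p → Fin 4 × Fin p → Prop) * (2 * bn + 1) ^ (2 * p - 3) := by
  choose u hu using exists_determining_positions_of_pattern hp hpe bn
  let F (J : pairedConnectedQuadruples p bn) :
      (Fin 4 × Fin p → Fin 4 × Fin p → Prop) × (Fin (2 * p - 3) → Icc (-(bn : ℤ)) bn) :=
    (pattern J.1, fun i => ⟨Function.uncurry J.1 (u (pattern J.1) i),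
      mem_Icc.mpr (abs_le.mp (J.2.1 _ _).2)⟩)
  have hF : Function.Injective F := by
    rintro ⟨J, hJ⟩ ⟨J', hJ'⟩ h
    obtain ⟨h1, h2⟩ := Prod.mk.inj h
    refine Subtype.ext (hu _ J hJ J' hJ' rfl h1.symm fun i => ?_)
    have := congrArg Subtype.val (congrFun h2 i)
    rwa [← h1] at this
  calc Nat.card (pairedConnectedQuadruples p bn) ≤ Nat.card (_ × _) :=
        Nat.card_le_card_of_injective F hF
    _ = _ := by
      rw [Nat.card_prod, Nat.card_fun (α := Fin _), Nat.card_eq_finsetCard, Int.card_Icc,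
        Nat.card_fin]
      congr
      omega

end IndexArray

theorem tendsto_two_mul_add_one_pow_div_pow_succ (k : ℕ) :
    Tendsto (fun n : ℕ => (2 * n + 1 : ℝ) ^ k / (n : ℝ) ^ (k + 1)) atTop (nhds 0) := by
  refine squeeze_zero' (Eventually.of_forall fun n => by positivity) ?_
    (tendsto_const_div_atTop_nhds_zero_nat (3 ^ k : ℝ))
  filter_upwards [eventually_ge_atTop 1] with n hn
  have hn' : (1 : ℝ) ≤ n := by exact_mod_cast hn
  rw [pow_succ, div_le_div_iff₀ (by positivity) (by positivity)]
  calc (2 * n + 1 : ℝ) ^ k * n ≤ (3 * n) ^ k * n := by gcongr; linarith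
    _ = 3 ^ k * (n ^ k * n) := by ring

/-- `|B_{P₄}| = o(b_n^{2p-2})`: connected quadruples `(J¹,J²,J³,J⁴) ∈ (A_p)⁴`
(no splitting of `{1,2,3,4}` into two nonempty groups whose coordinate
multisets are disjoint) in which every value of the combined multiset has
multiplicity at least `2`. -/
theorem count_B_P4_small_o (p : ℕ) (hp : 2 ≤ p) (hpe : Even p) :
    Tendsto (fun bn : ℕ =>
      (Nat.card {J : Fin 4 → (Fin p → ℤ) //
        (∀ m k, J m k ≠ 0 ∧ |J m k| ≤ (bn : ℤ)) ∧
        (∀ m, (∑ k : Fin p, (-1 : ℤ) ^ ((k : ℕ) + 1) * J m k) = 0) ∧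
        (∀ s : Finset (Fin 4), s.Nonempty → s ≠ Finset.univ →
          ∃ m ∈ s, ∃ m' ∈ Finset.univ \ s, ∃ (k l : Fin p), J m k = J m' l) ∧
        (∀ v : ℤ,
          (∑ m : Fin 4, (Finset.univ.filter (fun k : Fin p => J m k = v)).card) = 0 ∨
          2 ≤ ∑ m : Fin 4, (Finset.univ.filter (fun k : Fin p => J m k = v)).card)} : ℝ) /
        (bn : ℝ) ^ (2 * p - 2))
      atTop (nhds 0) := by
  set C := Nat.card (Fin 4 × Fin p → Fin 4 × Fin p → Prop)
  have hlim := (tendsto_two_mul_add_one_pow_div_pow_succ (2 * p - 3)).const_mul (C : ℝ)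
  rw [mul_zero] at hlim
  refine squeeze_zero (fun _ => by positivity) (fun bn => ?_) hlim
  rw [show 2 * p - 2 = 2 * p - 3 + 1 by omega, mul_div_assoc']
  gcongr
  refine (Nat.cast_le.mpr (IndexArray.card_pairedConnectedQuadruples_le hp hpe bn)).trans ?_
  push_cast
  rfl
end

section
/- Let p ≥ 2 be even and suppose J ∈ A_p = {(j_1,…,j_p) ∈ {±1,…,±b_n}^p : Σ_{k=1}^p (-1)^k j_k = 0} is such that every value appears with multiplicity exactly 2 in the multiset {j_1,…,j_p}. Then the number of such tuples J whose induced pair partition of the index set [p] is NOT odd-even (i.e., some matched pair of indices has the same parity) is at most C·b_n^{p/2 − 1} for a constant C depending only on p; equivalently, tuples with a same-parity matched index pair contribute at lower order than b_n^{p/2}. -/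
open Finset

section CountAux

variable {p : ℕ}

/-- The partner map: `pm J k` is the other index carrying the same value as `k`. -/
def pm (J : Fin p → ℤ) (k : Fin p) : Fin p :=
  if h : (((Finset.univ : Finset (Fin p)).filter (fun l => J l = J k)).erase k).Nonempty then
    (((Finset.univ : Finset (Fin p)).filter (fun l => J l = J k)).erase k).min' h
  else k

/-- Indices in a same-parity matched pair, smaller of the two. -/
def Tpar (J : Fin p → ℤ) : Finset (Fin p) :=
  (Finset.univ : Finset (Fin p)).filter
    (fun k => (k : ℕ) % 2 = (pm J k : ℕ) % 2 ∧ k < pm J k)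

/-- A canonical index belonging to a same-parity pair. -/
def k0 (J : Fin p → ℤ) (d : Fin p) : Fin p :=
  if h : (Tpar J).Nonempty then (Tpar J).min' h else d

/-- Pair representatives, excluding the special same-parity pair. -/
def Srep (J : Fin p → ℤ) (d : Fin p) : Finset (Fin p) :=
  (Finset.univ : Finset (Fin p)).filter (fun k => k < pm J k ∧ k ≠ k0 J d)

/-- Enumeration of `Srep`. -/
def el (J : Fin p → ℤ) (d : Fin p) (q1 : ℕ) (i : Fin q1) : Fin p :=
  if h : (Srep J d).card = q1 then ((Srep J d).orderIsoOfFin h i : Fin p) else d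

/-- Encode an integer value in `[-bn, bn]` as an element of `Fin (2*bn+1)`. -/
def enc (bn : ℕ) (v : ℤ) : Fin (2 * bn + 1) :=
  ⟨min (v + bn).toNat (2 * bn), by omega⟩

theorem enc_inj {bn : ℕ} {v w : ℤ} (hv : |v| ≤ (bn : ℤ)) (hw : |w| ≤ (bn : ℤ))
    (h : enc bn v = enc bn w) : v = w := by
  have h' := congrArg Fin.val h
  simp only [enc] at h'
  rw [abs_le] at hv hw
  omega

theorem pm_mem {J : Fin p → ℤ}
    (h2 : ∀ k, ((Finset.univ : Finset (Fin p)).filter (fun l => J l = J k)).card = 2)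
    (k : Fin p) :
    pm J k ∈ ((Finset.univ : Finset (Fin p)).filter (fun l => J l = J k)).erase k := by
  have hk : k ∈ (Finset.univ : Finset (Fin p)).filter (fun l => J l = J k) := by simp
  have hc : (((Finset.univ : Finset (Fin p)).filter (fun l => J l = J k)).erase k).card = 1 := by
    rw [Finset.card_erase_of_mem hk, h2]
  have hne : (((Finset.univ : Finset (Fin p)).filter (fun l => J l = J k)).erase k).Nonempty :=
    Finset.card_pos.mp (by omega)
  unfold pm
  rw [dif_pos hne]
  exact Finset.min'_mem _ _

theorem pm_ne {J : Fin p → ℤ}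
    (h2 : ∀ k, ((Finset.univ : Finset (Fin p)).filter (fun l => J l = J k)).card = 2)
    (k : Fin p) : pm J k ≠ k :=
  (Finset.mem_erase.mp (pm_mem h2 k)).1

theorem pm_eq {J : Fin p → ℤ}
    (h2 : ∀ k, ((Finset.univ : Finset (Fin p)).filter (fun l => J l = J k)).card = 2)
    (k : Fin p) : J (pm J k) = J k := by
  have := (Finset.mem_erase.mp (pm_mem h2 k)).2
  simpa using this

theorem pm_unique {J : Fin p → ℤ}
    (h2 : ∀ k, ((Finset.univ : Finset (Fin p)).filter (fun l => J l = J k)).card = 2)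
    {k l : Fin p} (hne : l ≠ k) (hJ : J l = J k) : l = pm J k := by
  have hk : k ∈ (Finset.univ : Finset (Fin p)).filter (fun l => J l = J k) := by simp
  have hc : (((Finset.univ : Finset (Fin p)).filter (fun l => J l = J k)).erase k).card = 1 := by
    rw [Finset.card_erase_of_mem hk, h2]
  have hl : l ∈ ((Finset.univ : Finset (Fin p)).filter (fun l => J l = J k)).erase k :=
    Finset.mem_erase.mpr ⟨hne, by simp [hJ]⟩
  exact Finset.card_le_one.mp (le_of_eq hc) l hl _ (pm_mem h2 k)

theorem pm_invol {J : Fin p → ℤ}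
    (h2 : ∀ k, ((Finset.univ : Finset (Fin p)).filter (fun l => J l = J k)).card = 2)
    (k : Fin p) : pm J (pm J k) = k :=
  (pm_unique h2 (Ne.symm (pm_ne h2 k)) (pm_eq h2 k).symm).symm

theorem k0_congr {J J' : Fin p → ℤ} (h : pm J = pm J') (d : Fin p) : k0 J d = k0 J' d := by
  unfold k0 Tpar
  simp only [h]

theorem srep_congr {J J' : Fin p → ℤ} (h : pm J = pm J') (d : Fin p) : Srep J d = Srep J' d := by
  unfold Srep
  rw [k0_congr h d]
  simp only [h]

theorem el_congr {J J' : Fin p → ℤ} (h : pm J = pm J') (d : Fin p) (q1 : ℕ) :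
    el J d q1 = el J' d q1 :=
  congrArg (fun s : Finset (Fin p) => fun i : Fin q1 =>
    if hc : s.card = q1 then ((s.orderIsoOfFin hc i : Fin p)) else d) (srep_congr h d)

theorem el_surj {J : Fin p → ℤ} {d : Fin p} {q1 : ℕ} (hc : (Srep J d).card = q1) {k : Fin p}
    (hk : k ∈ Srep J d) : ∃ i : Fin q1, el J d q1 i = k := by
  refine ⟨((Srep J d).orderIsoOfFin hc).symm ⟨k, hk⟩, ?_⟩
  unfold el
  rw [dif_pos hc]
  simp

theorem k0_spec {J : Fin p → ℤ}
    (h2 : ∀ k, ((Finset.univ : Finset (Fin p)).filter (fun l => J l = J k)).card = 2)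
    (hex : ∃ k l : Fin p, k ≠ l ∧ J k = J l ∧ (k : ℕ) % 2 = (l : ℕ) % 2) (d : Fin p) :
    (k0 J d : ℕ) % 2 = (pm J (k0 J d) : ℕ) % 2 ∧ k0 J d < pm J (k0 J d) := by
  obtain ⟨k, l, hkl, hJkl, hpar⟩ := hex
  have hl : l = pm J k := pm_unique h2 (Ne.symm hkl) hJkl.symm
  have hne : (Tpar J).Nonempty := by
    rcases lt_trichotomy k (pm J k) with h | h | h
    · refine ⟨k, ?_⟩
      simp only [Tpar, Finset.mem_filter, Finset.mem_univ, true_and]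
      exact ⟨hl ▸ hpar, h⟩
    · exact absurd h.symm (pm_ne h2 k)
    · refine ⟨pm J k, ?_⟩
      simp only [Tpar, Finset.mem_filter, Finset.mem_univ, true_and]
      rw [pm_invol h2]
      exact ⟨(hl ▸ hpar).symm, h⟩
  have hmem : k0 J d ∈ Tpar J := by
    unfold k0
    rw [dif_pos hne]
    exact Finset.min'_mem _ _
  simpa only [Tpar, Finset.mem_filter, Finset.mem_univ, true_and] using hmem

theorem srep_card (hpe : Even p) {J : Fin p → ℤ}
    (h2 : ∀ k, ((Finset.univ : Finset (Fin p)).filter (fun l => J l = J k)).card = 2)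
    (d : Fin p) (hk0 : k0 J d < pm J (k0 J d)) : (Srep J d).card = p / 2 - 1 := by
  classical
  set A := (Finset.univ : Finset (Fin p)).filter (fun k => k < pm J k) with hA
  set B := (Finset.univ : Finset (Fin p)).filter (fun k => pm J k < k) with hB
  have hScard : Srep J d = A.erase (k0 J d) := by
    ext k
    simp only [Srep, hA, Finset.mem_filter, Finset.mem_univ, true_and, Finset.mem_erase]
    tauto
  have hcompl : (Finset.univ : Finset (Fin p)).filter (fun k => ¬ k < pm J k) = B := by
    ext k
    simp only [hB, Finset.mem_filter, Finset.mem_univ, true_and, not_lt]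
    exact ⟨fun h => lt_of_le_of_ne h (pm_ne h2 k), le_of_lt⟩
  have hAB : A.card = B.card := by
    apply Finset.card_bij (fun k _ => pm J k)
    · intro a ha
      simp only [hA, hB, Finset.mem_filter, Finset.mem_univ, true_and] at ha ⊢
      rwa [pm_invol h2]
    · intro a ha b hb hab
      have := congrArg (pm J) hab
      rwa [pm_invol h2, pm_invol h2] at this
    · intro b hb
      simp only [hB, Finset.mem_filter, Finset.mem_univ, true_and] at hb
      refine ⟨pm J b, ?_, pm_invol h2 b⟩
      simp only [hA, Finset.mem_filter, Finset.mem_univ, true_and]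
      rwa [pm_invol h2]
  have htot := Finset.card_filter_add_card_filter_not
    (s := (Finset.univ : Finset (Fin p))) (p := fun k => k < pm J k)
  rw [hcompl, Finset.card_univ, Fintype.card_fin] at htot
  rw [← hA] at htot
  obtain ⟨m, hm⟩ := hpe
  clear_value A B
  have hAcard : A.card = p / 2 := by omega
  have hk0A : k0 J d ∈ A := by
    simp only [hA, Finset.mem_filter, Finset.mem_univ, true_and]
    exact hk0
  rw [hScard, Finset.card_erase_of_mem hk0A, hAcard]

theorem neg_one_pow_mod (a : ℕ) : ((-1 : ℤ)) ^ a = (-1) ^ (a % 2) := by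
  conv_lhs => rw [← Nat.div_add_mod a 2]
  rw [pow_add, pow_mul, neg_one_sq, one_pow, one_mul]

end CountAux

/-- Among tuples `J ∈ A_p` in which every value appears with multiplicity
exactly `2`, those whose induced pairing of indices is NOT odd-even (some
matched pair of indices has equal parity) number at most `C(p) · b_n^{p/2-1}`. -/
theorem count_non_odd_even_pairings (p : ℕ) (hp : 2 ≤ p) (hpe : Even p) :
    ∃ C : ℕ, ∀ bn : ℕ, 0 < bn →
      Nat.card {J : Fin p → ℤ //
        (∀ k, J k ≠ 0 ∧ |J k| ≤ (bn : ℤ)) ∧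
        (∑ k : Fin p, (-1 : ℤ) ^ ((k : ℕ) + 1) * J k) = 0 ∧
        (∀ k : Fin p, (Finset.univ.filter (fun l : Fin p => J l = J k)).card = 2) ∧
        (∃ k l : Fin p, k ≠ l ∧ J k = J l ∧ (k : ℕ) % 2 = (l : ℕ) % 2)} ≤
      C * bn ^ (p / 2 - 1) := by
  classical
  refine ⟨p ^ p * 3 ^ (p / 2 - 1), ?_⟩
  intro bn hbn
  set q1 := p / 2 - 1 with hq1
  have hd0 : 0 < p := by omega
  set d : Fin p := ⟨0, hd0⟩ with hdd
  set f : {J : Fin p → ℤ //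
        (∀ k, J k ≠ 0 ∧ |J k| ≤ (bn : ℤ)) ∧
        (∑ k : Fin p, (-1 : ℤ) ^ ((k : ℕ) + 1) * J k) = 0 ∧
        (∀ k : Fin p, (Finset.univ.filter (fun l : Fin p => J l = J k)).card = 2) ∧
        (∃ k l : Fin p, k ≠ l ∧ J k = J l ∧ (k : ℕ) % 2 = (l : ℕ) % 2)} →
      (Fin p → Fin p) × (Fin q1 → Fin (2 * bn + 1)) :=
    fun x => (pm x.1, fun i => enc bn (x.1 (el x.1 d q1 i))) with hf
  have hinj : Function.Injective f := by
    rintro ⟨J, hJ1, hJsum, hJ2, hJex⟩ ⟨J', hJ1', hJsum', hJ2', hJex'⟩ hxy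
    simp only [hf, Prod.mk.injEq] at hxy
    obtain ⟨hm, hg⟩ := hxy
    -- facts about J
    obtain ⟨hpar, hk0lt⟩ := k0_spec hJ2 hJex d
    have hScard : (Srep J d).card = q1 := srep_card hpe hJ2 d hk0lt
    -- agreement on Srep
    have hagree : ∀ k ∈ Srep J d, J k = J' k := by
      intro k hk
      obtain ⟨i, hi⟩ := el_surj hScard hk
      have h := congrFun hg i
      rw [← el_congr hm d q1] at h
      rw [hi] at h
      exact enc_inj (hJ1 k).2 (hJ1' k).2 h
    set κ := k0 J d with hκ
    set μ := pm J κ with hμ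
    have hκμ : κ ≠ μ := Ne.symm (pm_ne hJ2 κ)
    -- agreement off the special pair
    have hoff : ∀ k : Fin p, k ≠ κ → k ≠ μ → J k = J' k := by
      intro k hk1 hk2
      have hpmk : pm J k ≠ k := pm_ne hJ2 k
      rcases lt_or_gt_of_ne (Ne.symm hpmk) with h | h
      · -- k < pm J k
        have hkS : k ∈ Srep J d := by
          simp only [Srep, Finset.mem_filter, Finset.mem_univ, true_and]
          exact ⟨h, hk1⟩
        exact hagree k hkS
      · -- pm J k < k
        have hyk : pm J k ≠ κ := by
          intro hcon
          apply hk2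
          rw [hμ, ← hcon, pm_invol hJ2]
        have hyS : pm J k ∈ Srep J d := by
          simp only [Srep, Finset.mem_filter, Finset.mem_univ, true_and]
          refine ⟨?_, hyk⟩
          rw [pm_invol hJ2]
          exact h
        have h1 : J (pm J k) = J' (pm J k) := hagree _ hyS
        have h2 : J (pm J k) = J k := pm_eq hJ2 k
        have h3 : J' (pm J' k) = J' k := pm_eq hJ2' k
        rw [← hm] at h3
        rw [← h2, h1, h3]
    -- the special pair
    have hJμ : J μ = J κ := pm_eq hJ2 κ
    have hJ'μ : J' μ = J' κ := by
      have := pm_eq hJ2' κ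
      rwa [← hm] at this
    have hdiff : ∑ k : Fin p, (-1 : ℤ) ^ ((k : ℕ) + 1) * (J k - J' k) = 0 := by
      simp only [mul_sub, Finset.sum_sub_distrib, hJsum, hJsum', sub_zero]
    have hpairsum : ∑ k ∈ ({κ, μ} : Finset (Fin p)), (-1 : ℤ) ^ ((k : ℕ) + 1) * (J k - J' k)
        = ∑ k : Fin p, (-1 : ℤ) ^ ((k : ℕ) + 1) * (J k - J' k) := by
      apply Finset.sum_subset (Finset.subset_univ _)
      intro x _ hx
      simp only [Finset.mem_insert, Finset.mem_singleton, not_or] at hx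
      rw [hoff x hx.1 hx.2]
      ring
    rw [Finset.sum_pair hκμ, hdiff] at hpairsum
    have hpow : ((-1 : ℤ)) ^ ((κ : ℕ) + 1) = ((-1 : ℤ)) ^ ((μ : ℕ) + 1) := by
      rw [neg_one_pow_mod ((κ : ℕ) + 1), neg_one_pow_mod ((μ : ℕ) + 1)]
      congr 1
      omega
    rw [← hpow, ← mul_add] at hpairsum
    have hne0 : ((-1 : ℤ)) ^ ((κ : ℕ) + 1) ≠ 0 := pow_ne_zero _ (by norm_num)
    have hsum0 : (J κ - J' κ) + (J μ - J' μ) = 0 :=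
      (mul_eq_zero.mp hpairsum).resolve_left hne0
    have hκval : J κ = J' κ := by
      rw [hJμ, hJ'μ] at hsum0
      omega
    -- conclude
    apply Subtype.ext
    funext k
    show J k = J' k
    by_cases h1 : k = κ
    · rw [h1]; exact hκval
    by_cases h2 : k = μ
    · rw [h2, hJμ, hJ'μ]; exact hκval
    · exact hoff k h1 h2
  have hle := Nat.card_le_card_of_injective f hinj
  have htgt : Nat.card ((Fin p → Fin p) × (Fin q1 → Fin (2 * bn + 1)))
      = p ^ p * (2 * bn + 1) ^ q1 := by
    simp [Nat.card_eq_fintype_card]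
  rw [htgt] at hle
  refine hle.trans ?_
  rw [mul_assoc, ← mul_pow]
  gcongr
  clear hle hinj hf f
  omega
end

section
/- Let p ≥ 3 be odd, n and b_n positive integers, 1 ≤ i ≤ n with 2i ≠ n+1. Then the number of tuples (j_1,…,j_p) ∈ A_{p,i} = {(j_1,…,j_p) ∈ {±1,…,±b_n}^p : Σ_{k=1}^p (-1)^k j_k = 2i−1−n} in which some value appears with odd multiplicity at least 3 in the multiset {j_1,…,j_p} and all other values have multiplicity ≥ 2 is at most C·b_n^{(p−3)/2 + 1} = C·b_n^{(p−1)/2} for a constant C depending only on p. -/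
open Finset

/-- Auxiliary: a tuple with one value of odd multiplicity `≥ 3` and all other
present values of multiplicity `≥ 2` takes at most `(p-1)/2` distinct values. -/
theorem aux_card_image_odd_mult (p : ℕ) (hp : 3 ≤ p) (hpo : Odd p) (J : Fin p → ℤ)
    (h : ∃ v : ℤ,
          Odd ((Finset.univ.filter (fun k : Fin p => J k = v)).card) ∧
          3 ≤ ((Finset.univ.filter (fun k : Fin p => J k = v)).card) ∧
          ∀ w : ℤ, w ≠ v →
            (Finset.univ.filter (fun k : Fin p => J k = w)).card = 0 ∨
            2 ≤ (Finset.univ.filter (fun k : Fin p => J k = w)).card) :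
    (Finset.image J Finset.univ).card ≤ (p - 1) / 2 := by
  classical
  obtain ⟨v, _, h3, hrest⟩ := h
  set S := Finset.image J Finset.univ with hS
  have hsum : ∑ w ∈ S, (Finset.univ.filter (fun k : Fin p => J k = w)).card = p := by
    rw [← Finset.card_eq_sum_card_fiberwise (fun k _ => Finset.mem_image_of_mem J (mem_univ k))]
    simp
  have hvS : v ∈ S := by
    have hne : (Finset.univ.filter (fun k : Fin p => J k = v)).Nonempty :=
      Finset.card_pos.mp (by omega)
    obtain ⟨k, hk⟩ := hne
    exact Finset.mem_image.mpr ⟨k, mem_univ k, (Finset.mem_filter.mp hk).2⟩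
  have hge : ∀ w ∈ S.erase v, 2 ≤ (Finset.univ.filter (fun k : Fin p => J k = w)).card := by
    intro w hw
    rcases hrest w (Finset.mem_erase.mp hw).1 with h0 | h2
    · exfalso
      obtain ⟨k, _, hk⟩ := Finset.mem_image.mp (Finset.mem_erase.mp hw).2
      have : k ∈ Finset.univ.filter (fun k : Fin p => J k = w) :=
        Finset.mem_filter.mpr ⟨mem_univ k, hk⟩
      have := Finset.card_pos.mpr ⟨k, this⟩
      omega
    · exact h2
  have hsplit : ∑ w ∈ S, (Finset.univ.filter (fun k : Fin p => J k = w)).card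
      = (Finset.univ.filter (fun k : Fin p => J k = v)).card
        + ∑ w ∈ S.erase v, (Finset.univ.filter (fun k : Fin p => J k = w)).card :=
    (Finset.add_sum_erase _ _ hvS).symm
  have hlow : 2 * (S.erase v).card
      ≤ ∑ w ∈ S.erase v, (Finset.univ.filter (fun k : Fin p => J k = w)).card := by
    calc 2 * (S.erase v).card = ∑ _w ∈ S.erase v, 2 := by
          rw [Finset.sum_const, smul_eq_mul, mul_comm]
      _ ≤ _ := Finset.sum_le_sum hge
  have hcard : (S.erase v).card = S.card - 1 := Finset.card_erase_of_mem hvS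
  have hSpos : 1 ≤ S.card := Finset.card_pos.mpr ⟨v, hvS⟩
  obtain ⟨t, ht⟩ := hpo
  omega

/-- Counting bound: tuples in `A_{p,i}` (odd `p ≥ 3`, `2i ≠ n+1`) in which some
value has odd multiplicity at least `3` and all other values have multiplicity
at least `2` number at most `C(p) · b_n^{(p-1)/2}`. -/
theorem count_odd_multiplicity_three (p : ℕ) (hp : 3 ≤ p) (hpo : Odd p) :
    ∃ C : ℕ, ∀ (n bn : ℕ), 0 < n → 0 < bn → ∀ i : ℤ,
      1 ≤ i → i ≤ (n : ℤ) → 2 * i ≠ (n : ℤ) + 1 →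
      Nat.card {J : Fin p → ℤ //
        (∀ k, J k ≠ 0 ∧ |J k| ≤ (bn : ℤ)) ∧
        (∑ k : Fin p, (-1 : ℤ) ^ ((k : ℕ) + 1) * J k) = 2 * i - 1 - (n : ℤ) ∧
        (∃ v : ℤ,
          Odd ((Finset.univ.filter (fun k : Fin p => J k = v)).card) ∧
          3 ≤ (Finset.univ.filter (fun k : Fin p => J k = v)).card ∧
          ∀ w : ℤ, w ≠ v →
            (Finset.univ.filter (fun k : Fin p => J k = w)).card = 0 ∨
            2 ≤ (Finset.univ.filter (fun k : Fin p => J k = w)).card)} ≤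
      C * bn ^ ((p - 1) / 2) := by
  classical
  set m := (p - 1) / 2 with hm
  refine ⟨p ^ p * 3 ^ m, ?_⟩
  intro n bn hn hbn i h1 h2 h3
  set Sub := {J : Fin p → ℤ //
        (∀ k, J k ≠ 0 ∧ |J k| ≤ (bn : ℤ)) ∧
        (∑ k : Fin p, (-1 : ℤ) ^ ((k : ℕ) + 1) * J k) = 2 * i - 1 - (n : ℤ) ∧
        (∃ v : ℤ,
          Odd ((Finset.univ.filter (fun k : Fin p => J k = v)).card) ∧
          3 ≤ (Finset.univ.filter (fun k : Fin p => J k = v)).card ∧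
          ∀ w : ℤ, w ≠ v →
            (Finset.univ.filter (fun k : Fin p => J k = w)).card = 0 ∨
            2 ≤ (Finset.univ.filter (fun k : Fin p => J k = w)).card)} with hSub
  let L : Sub → List ℤ := fun J => (Finset.image J.1 Finset.univ).sort (· ≤ ·)
  have hlen : ∀ J : Sub, (L J).length ≤ m := by
    intro J
    rw [Finset.length_sort]
    exact aux_card_image_odd_mult p hp hpo J.1 J.2.2.2
  have hmemL : ∀ (J : Sub) (k : Fin p), J.1 k ∈ L J := by
    intro J k
    exact (Finset.mem_sort _).mpr (Finset.mem_image_of_mem _ (Finset.mem_univ k))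
  have hidx : ∀ (J : Sub) (k : Fin p), (L J).idxOf (J.1 k) < m := by
    intro J k
    exact lt_of_lt_of_le (List.idxOf_lt_length_iff.mpr (hmemL J k)) (hlen J)
  have hget : ∀ (J : Sub) (j : Fin m), (L J).getD j 0 ∈ Finset.Icc (-(bn : ℤ)) (bn : ℤ) := by
    intro J j
    by_cases hj : (j : ℕ) < (L J).length
    · rw [List.getD_eq_getElem _ _ hj]
      have hmem : (L J)[(j : ℕ)] ∈ Finset.image J.1 Finset.univ :=
        (Finset.mem_sort _).mp (List.getElem_mem _)
      obtain ⟨k, _, hk⟩ := Finset.mem_image.mp hmem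
      have := (J.2.1 k).2
      rw [← hk, Finset.mem_Icc]
      rw [abs_le] at this
      exact this
    · rw [List.getD_eq_default _ _ (le_of_not_gt hj)]
      exact Finset.mem_Icc.mpr ⟨by simp, by positivity⟩
  let Φ : Sub → (Fin p → Fin m) × (Fin m → Finset.Icc (-(bn : ℤ)) (bn : ℤ)) :=
    fun J => (fun k => ⟨(L J).idxOf (J.1 k), hidx J k⟩, fun j => ⟨(L J).getD j 0, hget J j⟩)
  have hrecover : ∀ (J : Sub) (k : Fin p),
      J.1 k = ((Φ J).2 ((Φ J).1 k) : ℤ) := by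
    intro J k
    show J.1 k = (L J).getD ((L J).idxOf (J.1 k)) 0
    rw [List.getD_eq_getElem _ _ (List.idxOf_lt_length_iff.mpr (hmemL J k))]
    rw [List.getElem_idxOf]
  have hinj : Function.Injective Φ := by
    intro J J' h
    ext k
    rw [hrecover J k, hrecover J' k, h]
  have hle := Nat.card_le_card_of_injective Φ hinj
  have hcardT : Nat.card ((Fin p → Fin m) × (Fin m → Finset.Icc (-(bn : ℤ)) (bn : ℤ)))
      = m ^ p * (2 * bn + 1) ^ m := by
    have hIcc : (Finset.Icc (-(bn : ℤ)) (bn : ℤ)).card = 2 * bn + 1 := by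
      rw [Int.card_Icc]; omega
    rw [Nat.card_eq_fintype_card, Fintype.card_prod, Fintype.card_fun, Fintype.card_fun,
      Fintype.card_coe, hIcc, Fintype.card_fin, Fintype.card_fin]
  refine le_trans hle (le_trans (le_of_eq hcardT) ?_)
  have h2bn : 2 * bn + 1 ≤ 3 * bn := by omega
  calc m ^ p * (2 * bn + 1) ^ m ≤ p ^ p * (3 * bn) ^ m := by
        exact Nat.mul_le_mul (Nat.pow_le_pow_left (by omega) p) (Nat.pow_le_pow_left h2bn m)
    _ = p ^ p * 3 ^ m * bn ^ m := by rw [mul_pow, mul_assoc]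
end
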